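/- arXiv:2406.04126 — 7 statements merged into one kernel-verified Lean document; each statement's English description precedes it below -/
import Mathlib

section
/- Suppose (A_n) admits a (μ,ν)-dichotomy with projections P_n, constants D, λ > 0, and suppose there exists ε ∈ [0,λ) with sup_n (μ_n^{-ε} ν_n) < ∞. Fix β ∈ (-(λ-ε), λ). Then for every y = (y_n) ∈ ℓ^1_{β,0} (i.e. Σ_n μ_n^β ν_n ‖y_n‖ < ∞ and y_0 = 0), the sequence x_n := Σ_{k=0}^n 𝒜(n,k) P_k y_k − Σ_{k=n+1}^∞ 𝒜(n,k)(Id − P_k) y_k satisfies sup_n (μ_n^β ‖x_n‖) ≤ D Σ_{k=0}^∞ μ_k^β ν_k ‖y_k‖, x_0 ∈ Ker P_0, and x_{n+1} − A_n x_n = y_{n+1} for all n ∈ ℕ. -/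
/-!
Each term of `x n` is controlled by the dichotomy estimates. For the stable terms (`k ≤ n`,
so `μ k ≤ μ n`) and the unstable ones (`n < k`, so `μ n ≤ μ k`) the weight `μ n ^ β` is traded
for `μ k ^ β` at the cost of a factor `(μ n / μ k) ^ (β - λ) ≤ 1`, resp.
`(μ k / μ n) ^ (-β - λ) ≤ 1`, which is where `-λ ≤ β ≤ λ` enters. Summing these bounds gives
the weighted estimate and the absolute convergence of the unstable series. Applying `A n`
termwise, the stable sum gains the term `P (n+1) y (n+1)` and the unstable one loses
`(1 - P (n+1)) y (n+1)`, which gives the difference equation; `x 0 ∈ Ker P 0` because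
`y 0 = 0` and `B 0 k` ranges in `Ker P 0`.
-/

open Finset

namespace Real

lemma rpow_mul_div_rpow_neg_le_rpow_of_neg_le {a b lam β : ℝ} (ha : 0 < a) (hab : a ≤ b)
    (hβ : -lam ≤ β) : a ^ β * (b / a) ^ (-lam) ≤ b ^ β :=
  calc a ^ β * (b / a) ^ (-lam)
      ≤ a ^ β * (b / a) ^ β := by
        gcongr
        exact (one_le_div ha).2 hab
    _ = b ^ β := by
        rw [div_rpow (ha.le.trans hab) ha.le]
        field_simp [(rpow_pos_of_pos ha β).ne']

lemma rpow_mul_div_rpow_neg_le_rpow_of_le {a b lam β : ℝ} (ha : 0 < a) (hab : a ≤ b)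
    (hβ : β ≤ lam) : b ^ β * (b / a) ^ (-lam) ≤ a ^ β :=
  have hb : 0 < b := ha.trans_le hab
  calc b ^ β * (b / a) ^ (-lam)
      ≤ b ^ β * (b / a) ^ (-β) := by
        gcongr
        exact (one_le_div ha).2 hab
    _ = a ^ β := by
        rw [rpow_neg (div_nonneg hb.le ha.le), div_rpow hb.le ha.le]
        field_simp [(rpow_pos_of_pos hb β).ne', (rpow_pos_of_pos ha β).ne']

end Real

namespace ContinuousLinearMap

variable {𝕜 E F : Type*} [NontriviallyNormedField 𝕜] [SeminormedAddCommGroup E]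
  [SeminormedAddCommGroup F] [NormedSpace 𝕜 E] [NormedSpace 𝕜 F] {T : E →L[𝕜] F}

lemma mul_norm_apply_le_of_opNorm_le_mul {K r c C : ℝ} (hT : ‖T‖ ≤ K * r) (hK : 0 ≤ K)
    (hc : 0 ≤ c) (hcr : c * r ≤ C) (v : E) : c * ‖T v‖ ≤ K * C * ‖v‖ :=
  calc c * ‖T v‖ ≤ c * (K * r * ‖v‖) := by gcongr; exact T.le_of_opNorm_le hT v
    _ = K * (c * r) * ‖v‖ := by ring
    _ ≤ K * C * ‖v‖ := by gcongr

lemma rpow_mul_norm_apply_le_of_neg_le {a b D ν lam β : ℝ} (ha : 0 < a) (hab : a ≤ b)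
    (hβ : -lam ≤ β) (hDν : 0 ≤ D * ν) (hT : ‖T‖ ≤ D * ν * (b / a) ^ (-lam)) (v : E) :
    a ^ β * ‖T v‖ ≤ D * (b ^ β * ν * ‖v‖) :=
  (mul_norm_apply_le_of_opNorm_le_mul hT hDν (Real.rpow_nonneg ha.le β)
    (Real.rpow_mul_div_rpow_neg_le_rpow_of_neg_le ha hab hβ) v).trans_eq (by ring)

lemma rpow_mul_norm_apply_le_of_le {a b D ν lam β : ℝ} (ha : 0 < a) (hab : a ≤ b)
    (hβ : β ≤ lam) (hDν : 0 ≤ D * ν) (hT : ‖T‖ ≤ D * ν * (b / a) ^ (-lam)) (v : E) :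
    b ^ β * ‖T v‖ ≤ D * (a ^ β * ν * ‖v‖) :=
  (mul_norm_apply_le_of_opNorm_le_mul hT hDν (Real.rpow_nonneg (ha.le.trans hab) β)
    (Real.rpow_mul_div_rpow_neg_le_rpow_of_le ha hab hβ) v).trans_eq (by ring)

end ContinuousLinearMap

section WeightedSeries

variable {E : Type*} [NormedAddCommGroup E] {t : ℕ → E} {b : ℕ → ℝ} {c : ℝ} {n : ℕ}

lemma summable_ite_lt (hb : Summable b) (n : ℕ) : Summable fun k => if n < k then b k else 0 :=
  (hb.indicator {k | n < k}).congr fun k => by simp [Set.indicator_apply]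

lemma sum_range_add_tsum_ite_lt (hb : Summable b) (n : ℕ) :
    ∑ k ∈ range (n + 1), b k + ∑' k, (if n < k then b k else 0) = ∑' k, b k := by
  rw [← hb.sum_add_tsum_compl (s := range (n + 1)), _root_.tsum_subtype]
  congr 2 with k
  simp [Set.indicator_apply]

lemma norm_ite_lt_le_div (hc : 0 < c) (ht : ∀ k, n < k → c * ‖t k‖ ≤ b k) (k : ℕ) :
    ‖if n < k then t k else 0‖ ≤ (if n < k then b k else 0) / c := by
  split_ifs with hk
  · exact (le_div_iff₀' hc).2 (ht k hk)
  · simp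

lemma summable_ite_lt_of_mul_norm_le [CompleteSpace E] (hb : Summable b) (hc : 0 < c)
    (ht : ∀ k, n < k → c * ‖t k‖ ≤ b k) : Summable fun k => if n < k then t k else 0 :=
  Summable.of_norm_bounded ((summable_ite_lt hb n).div_const c) (norm_ite_lt_le_div hc ht)

lemma mul_norm_sum_range_sub_tsum_ite_le (a : ℕ → E) (hb : Summable b) (hc : 0 < c)
    (ha : ∀ k ≤ n, c * ‖a k‖ ≤ b k) (ht : ∀ k, n < k → c * ‖t k‖ ≤ b k) :
    c * ‖∑ k ∈ range (n + 1), a k - ∑' k, (if n < k then t k else 0)‖ ≤ ∑' k, b k := by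
  have hsum : ‖∑ k ∈ range (n + 1), a k‖ ≤ ∑ k ∈ range (n + 1), b k / c :=
    norm_sum_le_of_le _ fun k hk => (le_div_iff₀' hc).2 (ha k (Nat.lt_succ_iff.1 (mem_range.1 hk)))
  have htail : ‖∑' k, (if n < k then t k else 0)‖ ≤ (∑' k, if n < k then b k else 0) / c :=
    tsum_of_norm_bounded ((summable_ite_lt hb n).hasSum.div_const c) (norm_ite_lt_le_div hc ht)
  calc c * ‖∑ k ∈ range (n + 1), a k - ∑' k, (if n < k then t k else 0)‖
      ≤ c * (∑ k ∈ range (n + 1), b k / c + (∑' k, (if n < k then b k else 0)) / c) := by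
        gcongr
        exact (norm_sub_le _ _).trans (add_le_add hsum htail)
    _ = ∑ k ∈ range (n + 1), b k + ∑' k, (if n < k then b k else 0) := by
        rw [← sum_div]; field_simp
    _ = ∑' k, b k := sum_range_add_tsum_ite_lt hb n

lemma tsum_ite_lt_eq_add_tsum_ite_succ_lt {f : ℕ → E} (n : ℕ)
    (hf : Summable fun k => if n + 1 < k then f k else 0) :
    ∑' k, (if n < k then f k else 0) = f (n + 1) + ∑' k, if n + 1 < k then f k else 0 := by
  calc ∑' k, (if n < k then f k else 0)
      = ∑' k, ((if n + 1 < k then f k else 0) + if k = n + 1 then f (n + 1) else 0) := by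
        congr with k
        rcases lt_trichotomy k (n + 1) with hk | rfl | hk
        · simp [show ¬n < k by omega, show ¬n + 1 < k by omega, hk.ne]
        · simp
        · simp [show n < k by omega, hk, hk.ne']
    _ = f (n + 1) + ∑' k, if n + 1 < k then f k else 0 := by
        rw [(hf.hasSum.add (hasSum_ite_eq _ _)).tsum_eq, add_comm]

end WeightedSeries

section GreenSums

variable {X : Type*} [NormedAddCommGroup X] [NormedSpace ℝ X]
  {A : ℕ → X →L[ℝ] X} {𝒜 B : ℕ → ℕ → X →L[ℝ] X} {P : ℕ → X →L[ℝ] X} {y : ℕ → X}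

def stableSum (𝒜 : ℕ → ℕ → X →L[ℝ] X) (P : ℕ → X →L[ℝ] X) (y : ℕ → X) (n : ℕ) :
    X :=
  ∑ k ∈ range (n + 1), 𝒜 n k (P k (y k))

noncomputable def unstableSum (B : ℕ → ℕ → X →L[ℝ] X) (y : ℕ → X) (n : ℕ) : X :=
  ∑' k, if n < k then B n k (y k) else 0

lemma stableSum_zero (hy0 : y 0 = 0) : stableSum 𝒜 P y 0 = 0 := by
  simp [stableSum, hy0]

lemma stableSum_succ (h𝒜id : ∀ n, 𝒜 n n = 1)
    (h𝒜succ : ∀ m n, n ≤ m → 𝒜 (m + 1) n = (A m).comp (𝒜 m n)) (n : ℕ) :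
    stableSum 𝒜 P y (n + 1) = A n (stableSum 𝒜 P y n) + P (n + 1) (y (n + 1)) := by
  rw [stableSum, sum_range_succ, h𝒜id, stableSum, map_sum]
  congr 1
  exact sum_congr rfl fun k hk => by
    rw [h𝒜succ n k (Nat.lt_succ_iff.1 (mem_range.1 hk))]
    rfl

lemma map_unstableSum_eq_zero (hBker : ∀ m n, m ≤ n → (P m).comp (B m n) = 0) {n : ℕ}
    (hn : Summable fun k => if n < k then B n k (y k) else 0) :
    P n (unstableSum B y n) = 0 := by
  rw [unstableSum, (P n).map_tsum hn]
  refine (tsum_congr fun k => ?_).trans tsum_zero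
  split_ifs with hk
  · exact DFunLike.congr_fun (hBker n k hk.le) (y k)
  · exact map_zero _

lemma map_unstableSum (hBdiag : ∀ n, B n n = 1 - P n)
    (hBstep : ∀ m n, m < n → (A m).comp (B m n) = B (m + 1) n) {n : ℕ}
    (hn : Summable fun k => if n < k then B n k (y k) else 0)
    (hn' : Summable fun k => if n + 1 < k then B (n + 1) k (y k) else 0) :
    A n (unstableSum B y n) = unstableSum B y (n + 1) + (1 - P (n + 1)) (y (n + 1)) :=
  calc A n (unstableSum B y n)
      = ∑' k, if n < k then B (n + 1) k (y k) else 0 := by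
        rw [unstableSum, (A n).map_tsum hn]
        congr with k
        split_ifs with hk
        · rw [← hBstep n k hk]; rfl
        · exact map_zero _
    _ = unstableSum B y (n + 1) + (1 - P (n + 1)) (y (n + 1)) := by
        rw [tsum_ite_lt_eq_add_tsum_ite_succ_lt n hn', hBdiag, add_comm, unstableSum]

end GreenSums

theorem stmt3_general {X : Type*} [NormedAddCommGroup X] [NormedSpace ℝ X] [CompleteSpace X]
    (μ : ℕ → ℝ) (hμpos : ∀ n, 0 < μ n) (hμmono : StrictMono μ)
    (ν : ℕ → ℝ) (hν : ∀ n, 1 ≤ ν n)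
    (A : ℕ → X →L[ℝ] X) (𝒜 : ℕ → ℕ → X →L[ℝ] X)
    (h𝒜id : ∀ n, 𝒜 n n = 1)
    (h𝒜succ : ∀ m n, n ≤ m → 𝒜 (m + 1) n = (A m).comp (𝒜 m n))
    -- the family of projections
    (P : ℕ → X →L[ℝ] X)
    -- the backward evolution on kernels: `B m n = 𝒜(m,n)(Id − P n)` for `m ≤ n`
    (B : ℕ → ℕ → X →L[ℝ] X)
    (hBdiag : ∀ n, B n n = 1 - P n)
    (hBstep : ∀ m n, m < n → (A m).comp (B m n) = B (m + 1) n)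
    (hBker : ∀ m n, m ≤ n → (P m).comp (B m n) = 0)
    -- the dichotomy estimates
    (D lam : ℝ) (hD : 0 < D)
    (hS : ∀ m n, n ≤ m → ‖(𝒜 m n).comp (P n)‖ ≤ D * ν n * (μ m / μ n) ^ (-lam))
    (hU : ∀ m n, m ≤ n → ‖B m n‖ ≤ D * ν n * (μ n / μ m) ^ (-lam))
    -- nonuniformity control
    (ε : ℝ) (hε0 : 0 ≤ ε)
    (β : ℝ) (hβ1 : -(lam - ε) < β) (hβ2 : β < lam)
    -- the input sequence `y ∈ ℓ^1_{β,0}`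
    (y : ℕ → X) (hy0 : y 0 = 0)
    (hy : Summable (fun n => μ n ^ β * ν n * ‖y n‖))
    -- the sequence `x`
    (x : ℕ → X)
    (hx : ∀ n, x n = (∑ k ∈ Finset.range (n + 1), 𝒜 n k (P k (y k)))
        - ∑' k : ℕ, if n < k then B n k (y k) else 0) :
    (∀ n, μ n ^ β * ‖x n‖ ≤ D * ∑' k : ℕ, μ k ^ β * ν k * ‖y k‖)
      ∧ P 0 (x 0) = 0
      ∧ ∀ n, x (n + 1) - A n (x n) = y (n + 1) := by
  have hβ : -lam ≤ β := by linarith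
  have hDν : ∀ k, 0 ≤ D * ν k := fun k => mul_nonneg hD.le (zero_le_one.trans (hν k))
  have hstable : ∀ n k, k ≤ n →
      μ n ^ β * ‖𝒜 n k (P k (y k))‖ ≤ D * (μ k ^ β * ν k * ‖y k‖) := fun n k hkn =>
    ((𝒜 n k).comp (P k)).rpow_mul_norm_apply_le_of_le (hμpos k) (hμmono.monotone hkn) hβ2.le
      (hDν k) (hS n k hkn) (y k)
  have hunstable : ∀ n k, n < k →
      μ n ^ β * ‖B n k (y k)‖ ≤ D * (μ k ^ β * ν k * ‖y k‖) := fun n k hnk =>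
    (B n k).rpow_mul_norm_apply_le_of_neg_le (hμpos n) (hμmono hnk).le hβ (hDν k)
      (hU n k hnk.le) (y k)
  have hsum : ∀ n, Summable fun k => if n < k then B n k (y k) else 0 := fun n =>
    summable_ite_lt_of_mul_norm_le (hy.mul_left D) (Real.rpow_pos_of_pos (hμpos n) β)
      (hunstable n)
  have hx' : ∀ n, x n = stableSum 𝒜 P y n - unstableSum B y n := hx
  refine ⟨fun n => ?_, ?_, fun n => ?_⟩
  · rw [hx' n, ← tsum_mul_left]
    exact mul_norm_sum_range_sub_tsum_ite_le _ (hy.mul_left D)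
      (Real.rpow_pos_of_pos (hμpos n) β) (hstable n) (hunstable n)
  · rw [hx' 0, stableSum_zero hy0, map_sub, map_zero, map_unstableSum_eq_zero hBker (hsum 0),
      sub_zero]
  · rw [hx', hx', stableSum_succ h𝒜id h𝒜succ, map_sub,
      map_unstableSum hBdiag hBstep (hsum n) (hsum (n + 1)), sub_apply, one_apply_eq_self]
    abel

/-- Suppose `(A_n)` admits a `(μ,ν)`-dichotomy (projections `P n`, backward
Green operators `B m n = 𝒜(m,n)(Id - P n)` for `m ≤ n`, constants `D, λ > 0`),
there is `ε ∈ [0,λ)` with `sup_n μ_n^{-ε} ν_n < ∞`, and `β ∈ (-(λ-ε), λ)`.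
Then for every `y ∈ ℓ^1_{β,0}`, the sequence
`x_n = Σ_{k=0}^n 𝒜(n,k)P_k y_k − Σ_{k>n} 𝒜(n,k)(Id−P_k) y_k` satisfies
`μ_n^β ‖x_n‖ ≤ D Σ_k μ_k^β ν_k ‖y_k‖`, `x_0 ∈ Ker P_0`, and
`x_{n+1} − A_n x_n = y_{n+1}` for all `n`. -/
theorem stmt3 {X : Type*} [NormedAddCommGroup X] [NormedSpace ℝ X] [CompleteSpace X]
    (μ : ℕ → ℝ) (hμpos : ∀ n, 0 < μ n) (hμmono : StrictMono μ)
    (hμtop : Filter.Tendsto μ Filter.atTop Filter.atTop)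
    (ν : ℕ → ℝ) (hν : ∀ n, 1 ≤ ν n)
    (A : ℕ → X →L[ℝ] X) (𝒜 : ℕ → ℕ → X →L[ℝ] X)
    (h𝒜id : ∀ n, 𝒜 n n = 1)
    (h𝒜succ : ∀ m n, n ≤ m → 𝒜 (m + 1) n = (A m).comp (𝒜 m n))
    -- the family of projections
    (P : ℕ → X →L[ℝ] X) (hP : ∀ n, (P n).comp (P n) = P n)
    (hPA : ∀ n, (A n).comp (P n) = (P (n + 1)).comp (A n))
    -- the backward evolution on kernels: `B m n = 𝒜(m,n)(Id − P n)` for `m ≤ n`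
    (B : ℕ → ℕ → X →L[ℝ] X)
    (hBdiag : ∀ n, B n n = 1 - P n)
    (hBstep : ∀ m n, m < n → (A m).comp (B m n) = B (m + 1) n)
    (hBker : ∀ m n, m ≤ n → (P m).comp (B m n) = 0)
    -- the dichotomy estimates
    (D lam : ℝ) (hD : 0 < D) (hlam : 0 < lam)
    (hS : ∀ m n, n ≤ m → ‖(𝒜 m n).comp (P n)‖ ≤ D * ν n * (μ m / μ n) ^ (-lam))
    (hU : ∀ m n, m ≤ n → ‖B m n‖ ≤ D * ν n * (μ n / μ m) ^ (-lam))
    -- nonuniformity control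
    (ε : ℝ) (hε0 : 0 ≤ ε) (hεlam : ε < lam)
    (hμν : ∃ M, ∀ n, μ n ^ (-ε) * ν n ≤ M)
    (β : ℝ) (hβ1 : -(lam - ε) < β) (hβ2 : β < lam)
    -- the input sequence `y ∈ ℓ^1_{β,0}`
    (y : ℕ → X) (hy0 : y 0 = 0)
    (hy : Summable (fun n => μ n ^ β * ν n * ‖y n‖))
    -- the sequence `x`
    (x : ℕ → X)
    (hx : ∀ n, x n = (∑ k ∈ Finset.range (n + 1), 𝒜 n k (P k (y k)))
        - ∑' k : ℕ, if n < k then B n k (y k) else 0) :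
    (∀ n, μ n ^ β * ‖x n‖ ≤ D * ∑' k : ℕ, μ k ^ β * ν k * ‖y k‖)
      ∧ P 0 (x 0) = 0
      ∧ ∀ n, x (n + 1) - A n (x n) = y (n + 1) :=
  stmt3_general μ hμpos hμmono ν hν A 𝒜 h𝒜id h𝒜succ P B hBdiag hBstep hBker D lam hD hS hU ε hε0 β
    hβ1 hβ2 y hy0 hy x hx
end

section
/- Under the admissibility hypotheses, the restriction A_n|_{U(n)} : U(n) → U(n+1) is a bijective linear map for every n ∈ ℕ, where U(n) = 𝒜(n,0)Z. -/
/-! If `A n` killed a nonzero vector `𝒜 n 0 u` with `u ∈ Z`, the orbit of `u` cut off after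
time `n` would be a nonzero bounded solution of the homogeneous equation starting in `Z`; it
would then compete with the zero solution, contradicting uniqueness in the admissibility
hypothesis. So `A n` is injective on the subspace `U n`, and it maps `U n` onto `U (n + 1)`
because `A n ∘ 𝒜 n 0 = 𝒜 (n + 1) 0`. -/

theorem exists_forall_le_of_eq_zero_of_lt {f : ℕ → ℝ} {n : ℕ} (hf : ∀ k, n < k → f k = 0) :
    ∃ C, ∀ k, f k ≤ C := by
  obtain ⟨C, hC⟩ := ((Set.finite_Iic n).image f).bddAbove
  refine ⟨max C 0, fun k => ?_⟩
  rcases le_or_gt k n with hk | hk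
  · exact (hC ⟨k, hk, rfl⟩).trans (le_max_left _ _)
  · exact (hf k hk).le.trans (le_max_right _ _)

section Admissibility

variable {X : Type*} [NormedAddCommGroup X] [NormedSpace ℝ X]
  {A : ℕ → X →L[ℝ] X} {𝒜 : ℕ → ℕ → X →L[ℝ] X}

def truncatedOrbit (𝒜 : ℕ → ℕ → X →L[ℝ] X) (u : X) (n k : ℕ) : X :=
  if k ≤ n then 𝒜 k 0 u else 0

theorem truncatedOrbit_succ_sub
    (h𝒜succ : ∀ m n, n ≤ m → 𝒜 (m + 1) n = (A m).comp (𝒜 m n))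
    {u : X} {n : ℕ} (hu : A n (𝒜 n 0 u) = 0) (k : ℕ) :
    truncatedOrbit 𝒜 u n (k + 1) - A k (truncatedOrbit 𝒜 u n k) = 0 := by
  unfold truncatedOrbit
  rcases lt_trichotomy k n with hk | rfl | hk
  · rw [if_pos (Nat.succ_le_of_lt hk), if_pos hk.le, h𝒜succ k 0 k.zero_le,
      ContinuousLinearMap.comp_apply, sub_self]
  · rw [if_neg k.not_succ_le_self, if_pos le_rfl, hu, sub_zero]
  · rw [if_neg (by omega : ¬k + 1 ≤ n), if_neg hk.not_ge, map_zero, sub_zero]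

/-- Proper admissibility of `(ℓ^1_{β,0}, ℓ^∞_{β,Z})`, the two spaces carrying the weights
`μ n ^ β * ν n` and `μ n ^ β`. -/
def ProperlyAdmissible (A : ℕ → X →L[ℝ] X) (μ ν : ℕ → ℝ) (β : ℝ) (Z : Submodule ℝ X) : Prop :=
  ∀ y : ℕ → X, y 0 = 0 → Summable (fun n => μ n ^ β * ν n * ‖y n‖) →
    ∃! x : ℕ → X, x 0 ∈ Z ∧ (∃ C, ∀ n, μ n ^ β * ‖x n‖ ≤ C) ∧
      ∀ n, x (n + 1) - A n (x n) = y (n + 1)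

variable {μ ν : ℕ → ℝ} {β : ℝ} {Z : Submodule ℝ X}

theorem ProperlyAdmissible.eq_zero_of_homogeneous (hadm : ProperlyAdmissible A μ ν β Z)
    {x : ℕ → X} (hx0 : x 0 ∈ Z) (hbdd : ∃ C, ∀ n, μ n ^ β * ‖x n‖ ≤ C)
    (hx : ∀ n, x (n + 1) - A n (x n) = 0) : x = 0 := by
  obtain ⟨_, _, huniq⟩ := hadm 0 rfl (by simp)
  exact (huniq x ⟨hx0, hbdd, hx⟩).trans (huniq 0 ⟨Z.zero_mem, ⟨0, by simp⟩, by simp⟩).symm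

theorem ProperlyAdmissible.evolution_eq_zero_of_map_eq_zero
    (hadm : ProperlyAdmissible A μ ν β Z) (h𝒜id : ∀ n, 𝒜 n n = 1)
    (h𝒜succ : ∀ m n, n ≤ m → 𝒜 (m + 1) n = (A m).comp (𝒜 m n))
    {u : X} (hu : u ∈ Z) {n : ℕ} (hAu : A n (𝒜 n 0 u) = 0) : 𝒜 n 0 u = 0 := by
  have hx0 : truncatedOrbit 𝒜 u n 0 ∈ Z := by
    rw [truncatedOrbit, if_pos n.zero_le, h𝒜id]
    exact hu
  have hbdd : ∃ C, ∀ k, μ k ^ β * ‖truncatedOrbit 𝒜 u n k‖ ≤ C :=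
    exists_forall_le_of_eq_zero_of_lt (n := n) fun k hk => by
      rw [truncatedOrbit, if_neg hk.not_ge, norm_zero, mul_zero]
  have htrunc := hadm.eq_zero_of_homogeneous hx0 hbdd (truncatedOrbit_succ_sub h𝒜succ hAu)
  simpa [truncatedOrbit] using congrFun htrunc n

end Admissibility

theorem stmt7_general {X : Type*} [NormedAddCommGroup X] [NormedSpace ℝ X]
    (μ : ℕ → ℝ)
    (ν : ℕ → ℝ)
    (A : ℕ → X →L[ℝ] X) (𝒜 : ℕ → ℕ → X →L[ℝ] X)
    (h𝒜id : ∀ n, 𝒜 n n = 1)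
    (h𝒜succ : ∀ m n, n ≤ m → 𝒜 (m + 1) n = (A m).comp (𝒜 m n))
    (Z : Submodule ℝ X)
    (β : ℝ)
    (hadm : ∀ y : ℕ → X, y 0 = 0 → Summable (fun n => μ n ^ β * ν n * ‖y n‖) →
      ∃! x : ℕ → X, x 0 ∈ Z ∧ (∃ C, ∀ n, μ n ^ β * ‖x n‖ ≤ C) ∧
        ∀ n, x (n + 1) - A n (x n) = y (n + 1))
    (U : ℕ → Set X) (hUdef : ∀ n, U n = (𝒜 n 0) '' (Z : Set X)) :
    ∀ n, Set.BijOn (fun v => A n v) (U n) (U (n + 1)) := by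
  intro n
  have himage : A n '' U n = U (n + 1) := by
    rw [hUdef, hUdef, Set.image_image, h𝒜succ n 0 n.zero_le]
    rfl
  rw [← himage]
  refine Set.InjOn.bijOn_image ?_
  rw [hUdef]
  rintro _ ⟨z₁, hz₁, rfl⟩ _ ⟨z₂, hz₂, rfl⟩ h
  have hker := ProperlyAdmissible.evolution_eq_zero_of_map_eq_zero hadm h𝒜id h𝒜succ
    (Z.sub_mem hz₁ hz₂) (by simpa [map_sub, sub_eq_zero] using h)
  simpa [map_sub, sub_eq_zero] using hker

/-- Under proper admissibility of `(ℓ^1_{β,0}, ℓ^∞_{β,Z})`, the restriction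
`A_n|_{U(n)} : U(n) → U(n+1)` is bijective for every `n`, where
`U(n) = 𝒜(n,0)Z`. -/
theorem stmt7 {X : Type*} [NormedAddCommGroup X] [NormedSpace ℝ X] [CompleteSpace X]
    (μ : ℕ → ℝ) (hμpos : ∀ n, 0 < μ n) (hμmono : StrictMono μ)
    (hμtop : Filter.Tendsto μ Filter.atTop Filter.atTop)
    (ν : ℕ → ℝ) (hν : ∀ n, 1 ≤ ν n)
    (A : ℕ → X →L[ℝ] X) (𝒜 : ℕ → ℕ → X →L[ℝ] X)
    (h𝒜id : ∀ n, 𝒜 n n = 1)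
    (h𝒜succ : ∀ m n, n ≤ m → 𝒜 (m + 1) n = (A m).comp (𝒜 m n))
    (Z : Submodule ℝ X) (hZ : IsClosed (Z : Set X))
    (β : ℝ) (hβ : 0 < β)
    (hadm : ∀ y : ℕ → X, y 0 = 0 → Summable (fun n => μ n ^ β * ν n * ‖y n‖) →
      ∃! x : ℕ → X, x 0 ∈ Z ∧ (∃ C, ∀ n, μ n ^ β * ‖x n‖ ≤ C) ∧
        ∀ n, x (n + 1) - A n (x n) = y (n + 1))
    (U : ℕ → Set X) (hUdef : ∀ n, U n = (𝒜 n 0) '' (Z : Set X)) :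
    ∀ n, Set.BijOn (fun v => A n v) (U n) (U (n + 1)) :=
  stmt7_general μ ν A 𝒜 h𝒜id h𝒜succ Z β hadm U hUdef
end

section
/- Under the admissibility hypotheses, there exists C̃ > 0 such that for every n ∈ ℕ, m ≤ n, and v ∈ U(n) = 𝒜(n,0)Z, the (well-defined) backward evolution satisfies ‖𝒜(m,n)v‖ ≤ C̃ (μ_n/μ_m)^{-β} ν_n ‖v‖, where 𝒜(m,n) : U(n) → U(m) is the inverse of 𝒜(n,m)|_{U(m)}. -/
/-!
Admissibility of `(ℓ¹_{-β,0}, ℓ^∞_{-β,Z})` makes the solution operator `y ↦ x` of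
`x (n + 1) = A n (x n) + y (n + 1)`, `x 0 ∈ Z`, an everywhere defined linear map with closed
graph between Banach spaces, hence bounded. For `w = 𝒜(m,0) z`, the trajectory `x k = 𝒜(k,0) z`
cut off at time `n` solves this equation with the single impulse `-x n` at time `n`, so
`μ_m^{-β} ‖x m‖ ≤ K μ_n^{-β} ν_n ‖x n‖`; this is the claim, as `x m = w` and `x n = v`.
-/

open ENNReal

theorem Submodule.exists_norm_snd_le_of_isClosed {𝕜 E F : Type*} [NontriviallyNormedField 𝕜]
    [NormedAddCommGroup E] [NormedSpace 𝕜 E] [CompleteSpace E]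
    [NormedAddCommGroup F] [NormedSpace 𝕜 F] [CompleteSpace F]
    (G : Submodule 𝕜 (E × F)) (hG : IsClosed (G : Set (E × F)))
    (hG_graph : ∀ e, ∃! f, (e, f) ∈ G) :
    ∃ K, 0 ≤ K ∧ ∀ p ∈ G, ‖p.2‖ ≤ K * ‖p.1‖ := by
  have : CompleteSpace G := hG.completeSpace_coe
  let π : G →L[𝕜] E := (ContinuousLinearMap.fst 𝕜 E F).comp G.subtypeL
  have hπ_inj : Function.Injective π := by
    rintro ⟨⟨e, f⟩, hf⟩ ⟨⟨e', f'⟩, hf'⟩ (rfl : e = e')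
    obtain rfl := (hG_graph e).unique hf hf'
    rfl
  have hπ_surj : Function.Surjective π := fun e =>
    ⟨⟨(e, (hG_graph e).exists.choose), (hG_graph e).exists.choose_spec⟩, rfl⟩
  -- Banach's bounded inverse theorem applied to the first projection
  let π' := ContinuousLinearEquiv.ofBijective π (LinearMap.ker_eq_bot.2 hπ_inj)
    (LinearMap.range_eq_top.2 hπ_surj)
  let σ : E →L[𝕜] F :=
    (ContinuousLinearMap.snd 𝕜 E F).comp <| G.subtypeL.comp π'.symm.toContinuousLinearMap
  refine ⟨‖σ‖, norm_nonneg σ, fun p hp => ?_⟩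
  have hσ : σ p.1 = p.2 := by
    have : π'.symm p.1 = ⟨p, hp⟩ := π'.symm_apply_eq.2 rfl
    simp [σ, this]
  exact hσ ▸ σ.le_opNorm p.1

theorem evolution_comp_evolution {R M : Type*} [Semiring R] [TopologicalSpace M]
    [AddCommMonoid M] [Module R M] {A : ℕ → M →L[R] M} {𝒜 : ℕ → ℕ → M →L[R] M}
    (h𝒜id : ∀ n, 𝒜 n n = 1) (h𝒜succ : ∀ m n, n ≤ m → 𝒜 (m + 1) n = (A m).comp (𝒜 m n))
    {k m n : ℕ} (hkm : k ≤ m) (hmn : m ≤ n) : (𝒜 n m).comp (𝒜 m k) = 𝒜 n k := by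
  induction n, hmn using Nat.le_induction with
  | base => ext; simp [h𝒜id]
  | succ n hmn ih =>
    rw [h𝒜succ n m hmn, h𝒜succ n k (hkm.trans hmn), ContinuousLinearMap.comp_assoc, ih]

section DifferenceEquation

variable {X : Type*} [NormedAddCommGroup X] [NormedSpace ℝ X]

def solutionSpace (A : ℕ → X →L[ℝ] X) (Z : Submodule ℝ X) :
    Submodule ℝ ((ℕ → X) × (ℕ → X)) where
  carrier := {p | p.2 0 ∈ Z ∧ ∀ n, p.2 (n + 1) - A n (p.2 n) = p.1 (n + 1)}
  add_mem' := by
    rintro p q ⟨hp0, hp⟩ ⟨hq0, hq⟩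
    refine ⟨Z.add_mem hp0 hq0, fun n => ?_⟩
    simp only [Prod.snd_add, Prod.fst_add, Pi.add_apply, map_add, ← hp n, ← hq n]
    abel
  zero_mem' := ⟨Z.zero_mem, fun n => by simp⟩
  smul_mem' := by
    rintro c p ⟨hp0, hp⟩
    refine ⟨Z.smul_mem c hp0, fun n => ?_⟩
    simp only [Prod.smul_snd, Prod.smul_fst, Pi.smul_apply, map_smul, ← hp n, smul_sub]

theorem mem_solutionSpace {A : ℕ → X →L[ℝ] X} {Z : Submodule ℝ X} {y x : ℕ → X} :
    (y, x) ∈ solutionSpace A Z ↔ x 0 ∈ Z ∧ ∀ n, x (n + 1) - A n (x n) = y (n + 1) :=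
  Iff.rfl

theorem isClosed_solutionSpace (A : ℕ → X →L[ℝ] X) {Z : Submodule ℝ X}
    (hZ : IsClosed (Z : Set X)) : IsClosed (solutionSpace A Z : Set ((ℕ → X) × (ℕ → X))) := by
  have : (solutionSpace A Z : Set ((ℕ → X) × (ℕ → X))) =
      {p | p.2 0 ∈ Z} ∩ ⋂ n, {p | p.2 (n + 1) - A n (p.2 n) = p.1 (n + 1)} := by
    ext p
    simp only [Set.mem_inter_iff, Set.mem_iInter]
    rfl
  rw [this]
  exact (hZ.preimage (by fun_prop)).inter <|
    isClosed_iInter fun n => isClosed_eq (by fun_prop) (by fun_prop)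

-- Admissibility of the pair `(ℓ¹_{w,0}, ℓ^∞_{ρ,Z})` of weighted sequence spaces.

def Admissible (A : ℕ → X →L[ℝ] X) (Z : Submodule ℝ X) (ρ w : ℕ → ℝ) : Prop :=
  ∀ y : ℕ → X, y 0 = 0 → Summable (fun n => w n * ‖y n‖) →
    ∃! x : ℕ → X, x 0 ∈ Z ∧ (∃ C, ∀ n, ρ n * ‖x n‖ ≤ C) ∧
      ∀ n, x (n + 1) - A n (x n) = y (n + 1)

theorem memℓp_one_smul_of_summable {w : ℕ → ℝ} (hw : ∀ n, 0 ≤ w n) {y : ℕ → X}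
    (hy : Summable fun n => w n * ‖y n‖) : Memℓp (fun n => w n • y n) 1 :=
  memℓp_gen <| by simpa [norm_smul_of_nonneg (hw _)] using hy

theorem memℓp_top_smul_of_bounded {ρ : ℕ → ℝ} (hρ : ∀ n, 0 ≤ ρ n) {x : ℕ → X}
    (hx : ∃ C, ∀ n, ρ n * ‖x n‖ ≤ C) : Memℓp (fun n => ρ n • x n) ∞ := by
  obtain ⟨C, hC⟩ := hx
  exact memℓp_infty ⟨C, by rintro _ ⟨n, rfl⟩; simpa [norm_smul_of_nonneg (hρ n)] using hC n⟩

-- A weighted space `ℓᵖ_w` is identified with `ℓᵖ` through `x ↦ w • x`;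
-- `unweightCLM p w` undoes this identification.
noncomputable def unweightCLM (p : ℝ≥0∞) [Fact (1 ≤ p)] (w : ℕ → ℝ) :
    lp (fun _ : ℕ => X) p →L[ℝ] ℕ → X :=
  ContinuousLinearMap.pi fun k => (w k)⁻¹ • lp.evalCLM ℝ (fun _ : ℕ => X) p k

section unweightCLM

variable {p : ℝ≥0∞} [Fact (1 ≤ p)] {w : ℕ → ℝ}

@[simp]
theorem unweightCLM_apply (f : lp (fun _ : ℕ => X) p) (k : ℕ) :
    unweightCLM p w f k = (w k)⁻¹ • f k :=
  rfl

theorem mul_norm_unweightCLM_apply (hw : ∀ k, 0 < w k) (f : lp (fun _ : ℕ => X) p) (k : ℕ) :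
    w k * ‖unweightCLM p w f k‖ = ‖f k‖ := by
  rw [unweightCLM_apply, norm_smul_of_nonneg (inv_nonneg.2 (hw k).le),
    mul_inv_cancel_left₀ (hw k).ne']

theorem unweightCLM_mk (hw : ∀ k, w k ≠ 0) {x : ℕ → X} (hx : Memℓp (fun k => w k • x k) p) :
    unweightCLM p w ⟨_, hx⟩ = x :=
  funext fun k => inv_smul_smul₀ (hw k) (x k)

theorem unweightCLM_injective (hw : ∀ k, w k ≠ 0) :
    Function.Injective (unweightCLM p w : lp (fun _ : ℕ => X) p → ℕ → X) := fun f g hfg =>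
  lp.ext <| funext fun k => by
    simpa [hw k] using congr_fun hfg k

end unweightCLM

noncomputable abbrev lpVanishingAtZero (X : Type*) [NormedAddCommGroup X] [NormedSpace ℝ X] :
    Submodule ℝ (lp (fun _ : ℕ => X) 1) :=
  (lp.evalCLM ℝ (fun _ : ℕ => X) 1 0).ker

noncomputable instance [CompleteSpace X] : CompleteSpace (lpVanishingAtZero X) :=
  (ContinuousLinearMap.isClosed_ker _).completeSpace_coe

-- The graph of the solution operator `ℓ¹_{w,0} → ℓ^∞_{ρ,Z}`, read in these coordinates.
noncomputable def weightedSolutionGraph (A : ℕ → X →L[ℝ] X) (Z : Submodule ℝ X) (ρ w : ℕ → ℝ) :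
    Submodule ℝ (lpVanishingAtZero X × lp (fun _ : ℕ => X) ∞) :=
  (solutionSpace A Z).comap
    (((unweightCLM 1 w).comp (lpVanishingAtZero X).subtypeL).prodMap (unweightCLM ∞ ρ)).toLinearMap

variable {A : ℕ → X →L[ℝ] X} {Z : Submodule ℝ X} {ρ w : ℕ → ℝ}

theorem mem_weightedSolutionGraph {f : lpVanishingAtZero X} {g : lp (fun _ : ℕ => X) ∞} :
    (f, g) ∈ weightedSolutionGraph A Z ρ w ↔
      (unweightCLM 1 w (f : lp (fun _ : ℕ => X) 1), unweightCLM ∞ ρ g) ∈ solutionSpace A Z :=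
  Iff.rfl

theorem isClosed_weightedSolutionGraph (hZ : IsClosed (Z : Set X)) :
    IsClosed (weightedSolutionGraph A Z ρ w : Set (lpVanishingAtZero X × lp (fun _ : ℕ => X) ∞)) :=
  (isClosed_solutionSpace A hZ).preimage (ContinuousLinearMap.continuous _)

theorem Admissible.existsUnique_mem_weightedSolutionGraph (h : Admissible A Z ρ w)
    (hρ : ∀ n, 0 < ρ n) (hw : ∀ n, 0 < w n) (f : lpVanishingAtZero X) :
    ∃! g, (f, g) ∈ weightedSolutionGraph A Z ρ w := by
  have hf0 : unweightCLM 1 w (f : lp (fun _ : ℕ => X) 1) 0 = 0 := by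
    simp [show (f : lp (fun _ : ℕ => X) 1) 0 = 0 from f.2]
  have hf_sum : Summable fun k => w k * ‖unweightCLM 1 w (f : lp (fun _ : ℕ => X) 1) k‖ := by
    simpa only [mul_norm_unweightCLM_apply hw, ENNReal.toReal_one, Real.rpow_one] using
      (lp.memℓp (f : lp (fun _ : ℕ => X) 1)).summable (by simp)
  obtain ⟨x, ⟨hx0, hxb, hxe⟩, hx_uniq⟩ := h _ hf0 hf_sum
  let g : lp (fun _ : ℕ => X) ∞ := ⟨_, memℓp_top_smul_of_bounded (fun n => (hρ n).le) hxb⟩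
  have hg : unweightCLM ∞ ρ g = x := unweightCLM_mk (fun k => (hρ k).ne') _
  refine ⟨g, mem_weightedSolutionGraph.2 (hg ▸ mem_solutionSpace.2 ⟨hx0, hxe⟩),
    fun g' ⟨hg'0, hg'e⟩ => ?_⟩
  refine unweightCLM_injective (fun k => (hρ k).ne') (hg ▸ hx_uniq _ ⟨hg'0, ?_, hg'e⟩)
  exact ⟨‖g'‖, fun k => (mul_norm_unweightCLM_apply hρ g' k).trans_le
    (lp.norm_apply_le_norm top_ne_zero g' k)⟩

theorem Admissible.exists_bound [CompleteSpace X] (h : Admissible A Z ρ w)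
    (hZ : IsClosed (Z : Set X)) (hρ : ∀ n, 0 < ρ n) (hw : ∀ n, 0 < w n) :
    ∃ K, 0 ≤ K ∧ ∀ y x, (y, x) ∈ solutionSpace A Z → y 0 = 0 →
      Summable (fun n => w n * ‖y n‖) → (∃ C, ∀ n, ρ n * ‖x n‖ ≤ C) →
      ∀ n, ρ n * ‖x n‖ ≤ K * ∑' k, w k * ‖y k‖ := by
  obtain ⟨K, hK0, hK⟩ := (weightedSolutionGraph A Z ρ w).exists_norm_snd_le_of_isClosed
    (isClosed_weightedSolutionGraph hZ) (h.existsUnique_mem_weightedSolutionGraph hρ hw)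
  refine ⟨K, hK0, fun y x hyx hy0 hy hx n => ?_⟩
  let f : lpVanishingAtZero X :=
    ⟨⟨_, memℓp_one_smul_of_summable (fun n => (hw n).le) hy⟩, show w 0 • y 0 = 0 by simp [hy0]⟩
  let g : lp (fun _ : ℕ => X) ∞ := ⟨_, memℓp_top_smul_of_bounded (fun n => (hρ n).le) hx⟩
  have hfg : (f, g) ∈ weightedSolutionGraph A Z ρ w := by
    rwa [mem_weightedSolutionGraph, unweightCLM_mk (fun k => (hρ k).ne'),
      unweightCLM_mk (fun k => (hw k).ne')]
  have hf : ‖f‖ = ∑' k, w k * ‖y k‖ := by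
    rw [Submodule.coe_norm, lp.norm_eq_tsum_rpow (by simp)]
    simp [f, norm_smul_of_nonneg (hw _).le]
  calc ρ n * ‖x n‖ = ‖g n‖ := (norm_smul_of_nonneg (hρ n).le _).symm
    _ ≤ ‖g‖ := lp.norm_apply_le_norm top_ne_zero g n
    _ ≤ K * ‖f‖ := hK _ hfg
    _ = K * ∑' k, w k * ‖y k‖ := by rw [hf]

theorem truncate_mem_solutionSpace {x : ℕ → X} (hx0 : x 0 ∈ Z)
    (hx : ∀ k, x (k + 1) = A k (x k)) {n : ℕ} (hn : 0 < n) :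
    (Pi.single n (-x n), fun k => if k < n then x k else 0) ∈ solutionSpace A Z := by
  refine mem_solutionSpace.2 ⟨by simpa [hn] using hx0, fun k => ?_⟩
  rcases lt_trichotomy (k + 1) n with hk | rfl | hk
  · simp [hk, (Nat.lt_succ_self k).trans hk, hx k, hk.ne]
  · simp [hx k]
  · simp [hk.not_gt, (Nat.lt_succ_iff.1 hk).not_gt, hk.ne']

theorem Admissible.exists_backward_bound [CompleteSpace X] (h : Admissible A Z ρ w)
    (hZ : IsClosed (Z : Set X)) (hρ : ∀ n, 0 < ρ n) (hw : ∀ n, 0 < w n)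
    (hρw : ∀ n, ρ n ≤ w n) :
    ∃ K > 0, ∀ x : ℕ → X, x 0 ∈ Z → (∀ k, x (k + 1) = A k (x k)) →
      ∀ m n, m ≤ n → ρ m * ‖x m‖ ≤ K * (w n * ‖x n‖) := by
  obtain ⟨K, hK0, hK⟩ := h.exists_bound hZ hρ hw
  refine ⟨K + 1, by positivity, fun x hx0 hx m n hmn => ?_⟩
  have hwx : 0 ≤ w n * ‖x n‖ := mul_nonneg (hw n).le (norm_nonneg _)
  rcases hmn.eq_or_lt with rfl | hmn
  · calc ρ m * ‖x m‖ ≤ w m * ‖x m‖ := by gcongr; exact hρw m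
      _ ≤ (K + 1) * (w m * ‖x m‖) := le_mul_of_one_le_left hwx (by linarith)
  have hsum : HasSum (fun k => w k * ‖(Pi.single n (-x n) : ℕ → X) k‖) (w n * ‖x n‖) := by
    convert hasSum_single (f := fun k => w k * ‖(Pi.single n (-x n) : ℕ → X) k‖) n
      fun k hk => by simp [hk] using 1
    simp
  have hbdd : ∃ C, ∀ k, ρ k * ‖if k < n then x k else 0‖ ≤ C := by
    refine ⟨∑ k ∈ Finset.range n, ρ k * ‖x k‖, fun k => ?_⟩
    have hnonneg : ∀ i ∈ Finset.range n, 0 ≤ ρ i * ‖x i‖ := fun i _ =>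
      mul_nonneg (hρ i).le (norm_nonneg _)
    split_ifs with hk
    · exact Finset.single_le_sum hnonneg (Finset.mem_range.2 hk)
    · simpa using Finset.sum_nonneg hnonneg
  have := hK _ _ (truncate_mem_solutionSpace hx0 hx (by omega))
    (Pi.single_eq_of_ne (by omega) _) hsum.summable hbdd m
  rw [hsum.tsum_eq, if_pos hmn] at this
  exact this.trans (by gcongr; linarith)

end DifferenceEquation

theorem stmt11_general {X : Type*} [NormedAddCommGroup X] [NormedSpace ℝ X] [CompleteSpace X]
    (μ : ℕ → ℝ) (hμpos : ∀ n, 0 < μ n)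
    (ν : ℕ → ℝ) (hν : ∀ n, 1 ≤ ν n)
    (A : ℕ → X →L[ℝ] X) (𝒜 : ℕ → ℕ → X →L[ℝ] X)
    (h𝒜id : ∀ n, 𝒜 n n = 1)
    (h𝒜succ : ∀ m n, n ≤ m → 𝒜 (m + 1) n = (A m).comp (𝒜 m n))
    (Z : Submodule ℝ X) (hZ : IsClosed (Z : Set X))
    (β : ℝ)
    (hadm₂ : ∀ y : ℕ → X, y 0 = 0 → Summable (fun n => μ n ^ (-β) * ν n * ‖y n‖) →
      ∃! x : ℕ → X, x 0 ∈ Z ∧ (∃ C, ∀ n, μ n ^ (-β) * ‖x n‖ ≤ C) ∧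
        ∀ n, x (n + 1) - A n (x n) = y (n + 1))
    (U : ℕ → Set X) (hUdef : ∀ n, U n = (𝒜 n 0) '' (Z : Set X)) :
    ∃ C > (0 : ℝ), ∀ n m, m ≤ n → ∀ v ∈ U n, ∀ w ∈ U m,
      𝒜 n m w = v → ‖w‖ ≤ C * (μ n / μ m) ^ (-β) * ν n * ‖v‖ := by
  have hρ n : 0 < μ n ^ (-β) := Real.rpow_pos_of_pos (hμpos n) _
  obtain ⟨K, hK0, hK⟩ := Admissible.exists_backward_bound hadm₂ hZ hρ
    (fun n => mul_pos (hρ n) (one_pos.trans_le (hν n)))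
    (fun n => le_mul_of_one_le_right (hρ n).le (hν n))
  refine ⟨K, hK0, fun n m hmn v _ w hw hwv => ?_⟩
  obtain ⟨z, hz, rfl⟩ := hUdef m ▸ hw
  have hx k : 𝒜 (k + 1) 0 z = A k (𝒜 k 0 z) := by simp [h𝒜succ k 0 k.zero_le]
  have hb := hK (fun k => 𝒜 k 0 z) (by simpa [h𝒜id] using hz) hx m n hmn
  rw [← evolution_comp_evolution h𝒜id h𝒜succ m.zero_le hmn,
    ContinuousLinearMap.comp_apply, hwv] at hb
  have hratio : K * (μ n / μ m) ^ (-β) * ν n * ‖v‖ =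
      K * (μ n ^ (-β) * ν n * ‖v‖) / μ m ^ (-β) := by
    rw [Real.div_rpow (hμpos n).le (hμpos m).le]
    ring
  rw [hratio, le_div_iff₀ (hρ m)]
  linarith

/-- Under the admissibility hypotheses, there exists `C̃ > 0` such that the
backward evolution on the unstable spaces `U(n) = 𝒜(n,0)Z` satisfies
`‖𝒜(m,n)v‖ ≤ C̃ (μ_n/μ_m)^{-β} ν_n ‖v‖` for `m ≤ n` and `v ∈ U(n)`; here
`𝒜(m,n) : U(n) → U(m)` is the inverse of `𝒜(n,m)|_{U(m)}`, so the claim is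
that `‖w‖ ≤ C̃ (μ_n/μ_m)^{-β} ν_n ‖v‖` whenever `w ∈ U(m)` and `𝒜(n,m)w = v`. -/
theorem stmt11 {X : Type*} [NormedAddCommGroup X] [NormedSpace ℝ X] [CompleteSpace X]
    (μ : ℕ → ℝ) (hμpos : ∀ n, 0 < μ n) (hμmono : StrictMono μ)
    (hμtop : Filter.Tendsto μ Filter.atTop Filter.atTop)
    (ν : ℕ → ℝ) (hν : ∀ n, 1 ≤ ν n)
    (A : ℕ → X →L[ℝ] X) (𝒜 : ℕ → ℕ → X →L[ℝ] X)
    (h𝒜id : ∀ n, 𝒜 n n = 1)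
    (h𝒜succ : ∀ m n, n ≤ m → 𝒜 (m + 1) n = (A m).comp (𝒜 m n))
    (Z : Submodule ℝ X) (hZ : IsClosed (Z : Set X))
    (β : ℝ) (hβ : 0 < β)
    (hadm₁ : ∀ y : ℕ → X, y 0 = 0 → Summable (fun n => μ n ^ β * ν n * ‖y n‖) →
      ∃! x : ℕ → X, x 0 ∈ Z ∧ (∃ C, ∀ n, μ n ^ β * ‖x n‖ ≤ C) ∧
        ∀ n, x (n + 1) - A n (x n) = y (n + 1))
    (hadm₂ : ∀ y : ℕ → X, y 0 = 0 → Summable (fun n => μ n ^ (-β) * ν n * ‖y n‖) →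
      ∃! x : ℕ → X, x 0 ∈ Z ∧ (∃ C, ∀ n, μ n ^ (-β) * ‖x n‖ ≤ C) ∧
        ∀ n, x (n + 1) - A n (x n) = y (n + 1))
    (U : ℕ → Set X) (hUdef : ∀ n, U n = (𝒜 n 0) '' (Z : Set X)) :
    ∃ C > (0 : ℝ), ∀ n m, m ≤ n → ∀ v ∈ U n, ∀ w ∈ U m,
      𝒜 n m w = v → ‖w‖ ≤ C * (μ n / μ m) ^ (-β) * ν n * ‖v‖ :=
  stmt11_general μ hμpos ν hν A 𝒜 h𝒜id h𝒜succ Z hZ β hadm₂ U hUdef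
end

section
/- In the compact-operator setting, if for each y ∈ ℓ^1_{β,0} there exists some x ∈ ℓ^∞_β solving x_{n+1} − A_n x_n = y_{n+1}, then for all m ≥ n ∈ ℕ one has X = 𝒜(m,n)X + S(m), where S(m) = {v : sup_{k≥m}‖𝒜(k,m)v‖ < ∞}. -/
/-!
Feed the admissibility hypothesis the sequence that is `v` at time `m` and `0` elsewhere. The
resulting bounded solution `x` solves the homogeneous equation except for the jump
`x m = 𝒜(m,n) x n + v`, so `v = 𝒜(m,n) (-x n) + x m`, and `x m ∈ S(m)` because
`𝒜(k,m) (x m) = x k` stays bounded for `k ≥ m`.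
-/

section Evolution

variable {R X : Type*} [Ring R] [TopologicalSpace X] [AddCommGroup X] [Module R X]
  {A : ℕ → X →L[R] X} {𝒜 : ℕ → ℕ → X →L[R] X}

theorem evolution_apply_eq_of_forall_succ_eq (h𝒜id : ∀ n, 𝒜 n n = 1)
    (h𝒜succ : ∀ m n, n ≤ m → 𝒜 (m + 1) n = (A m).comp (𝒜 m n))
    {x : ℕ → X} {a k : ℕ} (hak : a ≤ k) (hx : ∀ j, a ≤ j → j < k → x (j + 1) = A j (x j)) :
    𝒜 k a (x a) = x k := by
  induction k, hak using Nat.le_induction with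
  | base => simp [h𝒜id]
  | succ k hak ih =>
    rw [h𝒜succ k a hak, ContinuousLinearMap.comp_apply,
      ih fun j haj hjk => hx j haj (hjk.trans k.lt_succ_self), hx k hak k.lt_succ_self]

variable {x : ℕ → X} {p : ℕ} {v : X}

theorem succ_eq_of_single_forcing
    (hx : ∀ j, x (j + 1) - A j (x j) = Pi.single (M := fun _ => X) (p + 1) v (j + 1))
    {j : ℕ} (hj : j ≠ p) : x (j + 1) = A j (x j) :=
  sub_eq_zero.mp <| by simpa [hj] using hx j

theorem eq_evolution_add_of_single_forcing
    (hx : ∀ j, x (j + 1) - A j (x j) = Pi.single (M := fun _ => X) (p + 1) v (j + 1))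
    (h𝒜id : ∀ n, 𝒜 n n = 1) (h𝒜succ : ∀ m n, n ≤ m → 𝒜 (m + 1) n = (A m).comp (𝒜 m n))
    {n : ℕ} (hnp : n ≤ p) :
    v = 𝒜 (p + 1) n (-x n) + x (p + 1) := by
  have hjump : x (p + 1) - A p (x p) = v := by simpa using hx p
  have hxp : 𝒜 p n (x n) = x p := evolution_apply_eq_of_forall_succ_eq h𝒜id h𝒜succ hnp
    fun j _ hjp => succ_eq_of_single_forcing hx hjp.ne
  rw [map_neg, h𝒜succ p n hnp, ContinuousLinearMap.comp_apply, hxp, ← hjump]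
  abel

theorem evolution_apply_eq_of_single_forcing
    (hx : ∀ j, x (j + 1) - A j (x j) = Pi.single (M := fun _ => X) (p + 1) v (j + 1))
    (h𝒜id : ∀ n, 𝒜 n n = 1)
    (h𝒜succ : ∀ m n, n ≤ m → 𝒜 (m + 1) n = (A m).comp (𝒜 m n)) {k : ℕ} (hk : p + 1 ≤ k) :
    𝒜 k (p + 1) (x (p + 1)) = x k :=
  evolution_apply_eq_of_forall_succ_eq h𝒜id h𝒜succ hk
    fun j hj _ => succ_eq_of_single_forcing hx (by omega)

end Evolution

theorem norm_le_of_rpow_mul_norm_le {X : Type*} [NormedAddCommGroup X] {μ : ℕ → ℝ}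
    (hμ0 : 0 < μ 0) (hμ : Monotone μ) {β : ℝ} (hβ : 0 ≤ β) {x : ℕ → X} {C : ℝ}
    (hC : ∀ k, μ k ^ β * ‖x k‖ ≤ C) (k : ℕ) : ‖x k‖ ≤ C / μ 0 ^ β := by
  rw [le_div_iff₀ (by positivity)]
  calc ‖x k‖ * μ 0 ^ β ≤ ‖x k‖ * μ k ^ β := by gcongr; exact hμ k.zero_le
    _ ≤ C := by rw [mul_comm]; exact hC k

theorem stmt13_general {X : Type*} [NormedAddCommGroup X] [NormedSpace ℝ X]
    (μ : ℕ → ℝ) (hμpos : ∀ n, 0 < μ n) (hμmono : StrictMono μ)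
    (ν : ℕ → ℝ)
    (A : ℕ → X →L[ℝ] X) (𝒜 : ℕ → ℕ → X →L[ℝ] X)
    (h𝒜id : ∀ n, 𝒜 n n = 1)
    (h𝒜succ : ∀ m n, n ≤ m → 𝒜 (m + 1) n = (A m).comp (𝒜 m n))
    (β : ℝ) (hβ : 0 < β)
    (hadm : ∀ y : ℕ → X, y 0 = 0 → Summable (fun n => μ n ^ β * ν n * ‖y n‖) →
      ∃ x : ℕ → X, (∃ C, ∀ n, μ n ^ β * ‖x n‖ ≤ C) ∧
        ∀ n, x (n + 1) - A n (x n) = y (n + 1)) :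
    ∀ m n, n ≤ m → ∀ v : X, ∃ (w u : X),
      (∃ C, ∀ k, m ≤ k → ‖𝒜 k m u‖ ≤ C) ∧ v = 𝒜 m n w + u := by
  intro m n hnm v
  obtain rfl | hlt := hnm.eq_or_lt
  · exact ⟨v, 0, ⟨0, by simp⟩, by simp [h𝒜id]⟩
  obtain ⟨p, rfl⟩ : ∃ p, m = p + 1 := ⟨m - 1, by omega⟩
  have hsummable : Summable fun k => μ k ^ β * ν k * ‖Pi.single (M := fun _ => X) (p + 1) v k‖ :=
    (hasSum_single (p + 1) fun k hk => by simp [hk]).summable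
  obtain ⟨x, ⟨C, hC⟩, hx⟩ := hadm _ (by simp) hsummable
  refine ⟨-x n, x (p + 1), ⟨C / μ 0 ^ β, fun k hk => ?_⟩,
    eq_evolution_add_of_single_forcing hx h𝒜id h𝒜succ (by omega)⟩
  rw [evolution_apply_eq_of_single_forcing hx h𝒜id h𝒜succ hk]
  exact norm_le_of_rpow_mul_norm_le (hμpos 0) hμmono.monotone hβ.le hC k

/-- If for each `y ∈ ℓ^1_{β,0}` there exists some `x ∈ ℓ^∞_β` solving
`x_{n+1} − A_n x_n = y_{n+1}`, then for all `m ≥ n` one has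
`X = 𝒜(m,n)X + S(m)`, where `S(m) = {v : sup_{k≥m} ‖𝒜(k,m)v‖ < ∞}`. -/
theorem stmt13 {X : Type*} [NormedAddCommGroup X] [NormedSpace ℝ X] [CompleteSpace X]
    (μ : ℕ → ℝ) (hμpos : ∀ n, 0 < μ n) (hμmono : StrictMono μ)
    (hμtop : Filter.Tendsto μ Filter.atTop Filter.atTop)
    (ν : ℕ → ℝ) (hν : ∀ n, 1 ≤ ν n)
    (A : ℕ → X →L[ℝ] X) (𝒜 : ℕ → ℕ → X →L[ℝ] X)
    (h𝒜id : ∀ n, 𝒜 n n = 1)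
    (h𝒜succ : ∀ m n, n ≤ m → 𝒜 (m + 1) n = (A m).comp (𝒜 m n))
    (β : ℝ) (hβ : 0 < β)
    (hadm : ∀ y : ℕ → X, y 0 = 0 → Summable (fun n => μ n ^ β * ν n * ‖y n‖) →
      ∃ x : ℕ → X, (∃ C, ∀ n, μ n ^ β * ‖x n‖ ≤ C) ∧
        ∀ n, x (n + 1) - A n (x n) = y (n + 1)) :
    ∀ m n, n ≤ m → ∀ v : X, ∃ (w u : X),
      (∃ C, ∀ k, m ≤ k → ‖𝒜 k m u‖ ≤ C) ∧ v = 𝒜 m n w + u :=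
  stmt13_general μ hμpos hμmono ν A 𝒜 h𝒜id h𝒜succ β hβ hadm
end

section
/- Robustness of (μ,ν)-dichotomies: let (γ_n)_{n∈ℕ} be positive with Σ γ_n < ∞, suppose x_{n+1} = A_n x_n admits a (μ,ν)-dichotomy with constants D, λ > 0 and sup_n (μ_n^{-ε} ν_n) < ∞ for some ε ∈ [0,λ), and fix β ∈ (0, λ−ε). If (B_n)_{n∈ℕ} are bounded operators with ‖B_n‖ ≤ c γ_n μ_n^β / (ν_{n+1} μ_{n+1}^β) for all n, then for c > 0 sufficiently small the perturbed equation x_{n+1} = (A_n + B_n) x_n also admits a (μ,ν)-dichotomy. -/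
/-!
The unperturbed dichotomy is encoded in its Green kernel `G₀ m n`, equal to `𝒜 m n P n` for
`n ≤ m` and to `-B m n` for `m < n`; it solves the equation in `m` with a unit impulse at `n`,
and the adjoint equation in `n`. The smallness of `B'` makes
`G ↦ G₀ + ∑ₖ G₀ (·) (k + 1) B' k G k (·)` a contraction for the weighted norm
`‖G m n‖ / (ν n (μ_max / μ_min) ^ (-β))` (the weight is submultiplicative and `β ≤ λ`), so its
Neumann series converges to a kernel `G` obeying the same kind of bound and solving the perturbed
equation with a unit impulse.

Solutions `H` of the perturbed equation that decay like the weight and start in `ker P 0`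
vanish: by variation of constants `H = ∑ₖ G₀ (·) (k + 1) B' k H k`, the boundary term
`B m M H M` dying because `ν M μ M ^ (-λ) ≤ M₀ μ M ^ (ε - λ) → 0`, so the weighted norm of `H`
is at most half of itself.
This uniqueness makes `G` a Green kernel in both variables, and an invariant splitting of the
perturbed equation is read off it: projections `G n n`, backward evolutions `δ m n - G m n`,
with constants `2 D + 1` and `β`.
-/

open Filter Topology Asymptotics

/-- `growthWeight μ t m n = (max (μ m) (μ n) / min (μ m) (μ n)) ^ (-t)` for positive `μ`,
written symmetrically so that it is submultiplicative along any three indices. -/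
noncomputable def growthWeight (μ : ℕ → ℝ) (t : ℝ) (m n : ℕ) : ℝ :=
  Real.exp (-(t * |Real.log (μ m) - Real.log (μ n)|))

namespace growthWeight

variable {μ : ℕ → ℝ} {s t : ℝ} {m n : ℕ}

lemma pos : 0 < growthWeight μ t m n := Real.exp_pos _

@[simp]
lemma self : growthWeight μ t n n = 1 := by simp [growthWeight]

lemma comm : growthWeight μ t m n = growthWeight μ t n m := by
  simp only [growthWeight, abs_sub_comm]

lemma le_one (ht : 0 ≤ t) : growthWeight μ t m n ≤ 1 :=
  Real.exp_le_one_iff.mpr (neg_nonpos.mpr (mul_nonneg ht (abs_nonneg _)))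

lemma mul_le (ht : 0 ≤ t) (m k n : ℕ) :
    growthWeight μ t m k * growthWeight μ t k n ≤ growthWeight μ t m n := by
  simp only [growthWeight, ← Real.exp_add, Real.exp_le_exp]
  nlinarith [abs_sub_le (Real.log (μ m)) (Real.log (μ k)) (Real.log (μ n))]

lemma anti (hst : s ≤ t) : growthWeight μ t m n ≤ growthWeight μ s m n :=
  Real.exp_le_exp.mpr (by nlinarith [abs_nonneg (Real.log (μ m) - Real.log (μ n))])

lemma le_div (ht : 0 ≤ t) (m n k : ℕ) :
    growthWeight μ t m n ≤ growthWeight μ t m k / growthWeight μ t n k := by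
  rw [le_div_iff₀ pos]
  exact mul_le ht m n k

lemma eq_rpow (hμ : ∀ j, 0 < μ j) (hmono : Monotone μ) (h : n ≤ m) :
    growthWeight μ t m n = (μ m / μ n) ^ (-t) := by
  have hlog : Real.log (μ n) ≤ Real.log (μ m) := Real.log_le_log (hμ n) (hmono h)
  rw [Real.rpow_def_of_pos (div_pos (hμ m) (hμ n)), Real.log_div (hμ m).ne' (hμ n).ne',
    growthWeight, abs_of_nonneg (sub_nonneg.mpr hlog)]
  ring_nf

end growthWeight

section Splitting

variable {R : Type*} [Ring R]

structure IsEvolution (A : ℕ → R) (𝒜 : ℕ → ℕ → R) : Prop where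
  self : ∀ n, 𝒜 n n = 1
  succ : ∀ m n, n ≤ m → 𝒜 (m + 1) n = A m * 𝒜 m n

/-- `P n` projects onto the stable space at time `n`, and `B m n` (for `m ≤ n`) is the
backward evolution from time `n` to time `m` on the unstable spaces `ker P`. -/
structure IsInvariantSplitting (A P : ℕ → R) (B : ℕ → ℕ → R) : Prop where
  proj_mul_self : ∀ n, P n * P n = P n
  step_mul_proj : ∀ n, A n * P n = P (n + 1) * A n
  bwd_self : ∀ n, B n n = 1 - P n
  step_mul_bwd : ∀ m n, m < n → A m * B m n = B (m + 1) n
  proj_mul_bwd : ∀ m n, m ≤ n → P m * B m n = 0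
  bwd_mul_step : ∀ n, B n (n + 1) * A n * (1 - P n) = 1 - P n

def greenKernel (𝒜 : ℕ → ℕ → R) (P : ℕ → R) (B : ℕ → ℕ → R) (m n : ℕ) : R :=
  if n ≤ m then 𝒜 m n * P n else -B m n

variable {A P : ℕ → R} {𝒜 B : ℕ → ℕ → R}

namespace IsEvolution

lemma mul_step (h𝒜 : IsEvolution A 𝒜) {m k : ℕ} (hkm : k < m) :
    𝒜 m (k + 1) * A k = 𝒜 m k := by
  induction m, hkm using Nat.le_induction with
  | base => rw [h𝒜.self, one_mul, h𝒜.succ k k le_rfl, h𝒜.self, mul_one]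
  | succ m hkm ih =>
    rw [h𝒜.succ m (k + 1) hkm, mul_assoc, ih, ← h𝒜.succ m k (Nat.le_of_succ_le hkm)]

lemma proj_mul (h𝒜 : IsEvolution A 𝒜) (hs : IsInvariantSplitting A P B) {m n : ℕ}
    (hnm : n ≤ m) : P m * 𝒜 m n = 𝒜 m n * P n := by
  induction m, hnm using Nat.le_induction with
  | base => rw [h𝒜.self, one_mul, mul_one]
  | succ m hnm ih =>
    rw [h𝒜.succ m n hnm, ← mul_assoc, ← hs.step_mul_proj, mul_assoc, ih, mul_assoc]

lemma mul_bwd (h𝒜 : IsEvolution A 𝒜) (hs : IsInvariantSplitting A P B) {m j n : ℕ}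
    (hmj : m ≤ j) (hjn : j ≤ n) : 𝒜 j m * B m n = B j n := by
  induction j, hmj using Nat.le_induction with
  | base => rw [h𝒜.self, one_mul]
  | succ j hmj ih =>
    rw [h𝒜.succ j m hmj, mul_assoc, ih (Nat.le_of_succ_le hjn), hs.step_mul_bwd j n hjn]

lemma eq_zero_of_proj_mul (h𝒜 : IsEvolution A 𝒜) (hs : IsInvariantSplitting A P B)
    {m j : ℕ} (hmj : m ≤ j) {Y : R} (hP : P m * Y = 0) (h𝒜Y : 𝒜 j m * Y = 0) : Y = 0 := by
  induction j, hmj using Nat.le_induction with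
  | base => rwa [h𝒜.self, one_mul] at h𝒜Y
  | succ j hmj ih =>
    refine ih ?_
    have hZ : P j * (𝒜 j m * Y) = 0 := by
      rw [← mul_assoc, h𝒜.proj_mul hs hmj, mul_assoc, hP, mul_zero]
    have hAZ : A j * (𝒜 j m * Y) = 0 := by rw [← mul_assoc, ← h𝒜.succ j m hmj, h𝒜Y]
    have hZZ : (1 - P j) * (𝒜 j m * Y) = 𝒜 j m * Y := by rw [sub_mul, hZ, one_mul, sub_zero]
    calc 𝒜 j m * Y = B j (j + 1) * A j * (1 - P j) * (𝒜 j m * Y) := by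
          rw [hs.bwd_mul_step, hZZ]
      _ = B j (j + 1) * (A j * ((1 - P j) * (𝒜 j m * Y))) := by simp only [mul_assoc]
      _ = 0 := by rw [hZZ, hAZ, mul_zero]

lemma bwd_succ_mul_step (h𝒜 : IsEvolution A 𝒜) (hs : IsInvariantSplitting A P B) {m k : ℕ}
    (hmk : m ≤ k) : B m (k + 1) * A k = B m k := by
  refine sub_eq_zero.mp (h𝒜.eq_zero_of_proj_mul hs (m := m) (j := k + 1) (by omega) ?_ ?_)
  · rw [mul_sub, ← mul_assoc, hs.proj_mul_bwd m (k + 1) (by omega), hs.proj_mul_bwd m k hmk,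
      zero_mul, sub_zero]
  · rw [mul_sub, ← mul_assoc, h𝒜.mul_bwd hs (m := m) (j := k + 1) (by omega) le_rfl,
      h𝒜.succ k m hmk, mul_assoc, h𝒜.mul_bwd hs hmk le_rfl, hs.bwd_self, hs.bwd_self, mul_sub,
      sub_mul, hs.step_mul_proj]
    noncomm_ring

end IsEvolution

structure IsGreenKernel (L : ℕ → R) (G : ℕ → ℕ → R) : Prop where
  succ_left : ∀ m n, G (m + 1) n = L m * G m n + if m + 1 = n then 1 else 0
  succ_right : ∀ m n, G m (n + 1) * L n = G m n - if m = n then 1 else 0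

lemma isGreenKernel_greenKernel (h𝒜 : IsEvolution A 𝒜) (hs : IsInvariantSplitting A P B) :
    IsGreenKernel A (greenKernel 𝒜 P B) where
  succ_left m n := by
    simp only [greenKernel]
    rcases lt_trichotomy n (m + 1) with h | rfl | h
    · rw [if_pos (by omega), if_pos (by omega), if_neg (by omega), h𝒜.succ m n (by omega),
        mul_assoc, add_zero]
    · rw [if_pos le_rfl, if_neg (by omega), if_pos rfl, h𝒜.self, one_mul, mul_neg,
        hs.step_mul_bwd m (m + 1) (by omega), hs.bwd_self]
      abel
    · rw [if_neg (by omega), if_neg (by omega), if_neg (by omega), mul_neg,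
        hs.step_mul_bwd m n (by omega), add_zero]
  succ_right m n := by
    simp only [greenKernel]
    rcases lt_trichotomy m n with h | rfl | h
    · rw [if_neg (by omega), if_neg (by omega), if_neg (by omega), neg_mul,
        h𝒜.bwd_succ_mul_step hs h.le, sub_zero]
    · rw [if_neg (by omega), if_pos le_rfl, if_pos rfl, neg_mul,
        h𝒜.bwd_succ_mul_step hs le_rfl, hs.bwd_self, h𝒜.self, one_mul]
      abel
    · rw [if_pos (by omega), if_pos (by omega), if_neg (by omega), mul_assoc,
        ← hs.step_mul_proj, ← mul_assoc, h𝒜.mul_step h, sub_zero]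

lemma greenKernel_zero_mul_proj (hs : IsInvariantSplitting A P B) (m : ℕ) :
    greenKernel 𝒜 P B m 0 * P 0 = greenKernel 𝒜 P B m 0 := by
  simp only [greenKernel, if_pos (Nat.zero_le m), mul_assoc, hs.proj_mul_self]

lemma proj_mul_greenKernel_zero (h𝒜 : IsEvolution A 𝒜) (hs : IsInvariantSplitting A P B)
    (n : ℕ) : P 0 * greenKernel 𝒜 P B 0 n = if n = 0 then P 0 else 0 := by
  rcases Nat.eq_zero_or_pos n with rfl | hn
  · simp [greenKernel, h𝒜.self, hs.proj_mul_self]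
  · simp [greenKernel, hn.ne', hs.proj_mul_bwd 0 n hn.le]

namespace IsGreenKernel

variable {L : ℕ → R} {G : ℕ → ℕ → R}

lemma evolution_mul_diag (hG : IsGreenKernel L G) {𝒜 : ℕ → ℕ → R} (h𝒜 : IsEvolution L 𝒜)
    {m n : ℕ} (hnm : n ≤ m) : 𝒜 m n * G n n = G m n := by
  induction m, hnm using Nat.le_induction with
  | base => rw [h𝒜.self, one_mul]
  | succ m hnm ih =>
    rw [h𝒜.succ m n hnm, mul_assoc, ih, hG.succ_left, if_neg (by omega), add_zero]

lemma isInvariantSplitting (hG : IsGreenKernel L G) (hidem : ∀ n, G n n * G n n = G n n)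
    (horth : ∀ m n, m < n → G m m * G m n = 0) :
    IsInvariantSplitting L (fun n => G n n) (fun m n => (if m = n then 1 else 0) - G m n) where
  proj_mul_self := hidem
  step_mul_proj n := by
    rw [hG.succ_right, hG.succ_left, if_neg (by omega), add_zero, sub_zero]
  bwd_self n := by rw [if_pos rfl]
  step_mul_bwd m n hmn := by
    rw [if_neg hmn.ne, zero_sub, mul_neg, hG.succ_left]
    abel
  proj_mul_bwd m n hmn := by
    rcases hmn.eq_or_lt with rfl | h
    · rw [if_pos rfl, mul_sub, mul_one, hidem, sub_self]
    · rw [if_neg h.ne, zero_sub, mul_neg, horth m n h, neg_zero]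
  bwd_mul_step n := by
    rw [if_neg (by omega), zero_sub, neg_mul, hG.succ_right, if_pos rfl, neg_sub, mul_sub,
      mul_one, sub_mul, one_mul, hidem, sub_self, sub_zero]

end IsGreenKernel

end Splitting

section Perturbation

variable {R : Type*} [NormedRing R]

/-- The smallness condition on a perturbation `E` of an equation with Green kernel `G₀`:
`W` bounds `G₀`, and one step `G₀ (·) (k + 1) E k` of the perturbation series costs the factor
`a k` against the weight `W`, where `∑ a = q < 1`. -/
structure IsAdmissiblePerturbation (G₀ : ℕ → ℕ → R) (E : ℕ → R) (W : ℕ → ℕ → ℝ)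
    (a : ℕ → ℝ) (q : ℝ) : Prop where
  norm_le : ∀ m n, ‖G₀ m n‖ ≤ W m n
  norm_mul_mul_le : ∀ m n k, ‖G₀ m (k + 1) * E k‖ * W k n ≤ a k * W m n
  nonneg : ∀ k, 0 ≤ a k
  hasSum : HasSum a q
  lt_one : q < 1

noncomputable def neumannTerm (G₀ : ℕ → ℕ → R) (E : ℕ → R) : ℕ → ℕ → ℕ → R
  | 0 => G₀
  | p + 1 => fun m n => ∑' k, G₀ m (k + 1) * E k * neumannTerm G₀ E p k n

noncomputable def perturbedKernel (G₀ : ℕ → ℕ → R) (E : ℕ → R) (m n : ℕ) : R :=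
  ∑' p, neumannTerm G₀ E p m n

def BoundedSolutionsVanish (L : ℕ → R) (Q : R) (u : ℕ → ℝ) : Prop :=
  ∀ H : ℕ → R, (∀ j, H (j + 1) = L j * H j) → Q * H 0 = 0 → H =O[atTop] u → H = 0

namespace IsAdmissiblePerturbation

variable {G₀ : ℕ → ℕ → R} {E : ℕ → R} {W : ℕ → ℕ → ℝ} {a : ℕ → ℝ} {q : ℝ}

lemma weight_nonneg (h : IsAdmissiblePerturbation G₀ E W a q) (m n : ℕ) : 0 ≤ W m n :=
  (norm_nonneg _).trans (h.norm_le m n)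

lemma q_nonneg (h : IsAdmissiblePerturbation G₀ E W a q) : 0 ≤ q :=
  h.hasSum.nonneg h.nonneg

lemma norm_mul_le_of_norm_le (h : IsAdmissiblePerturbation G₀ E W a q) {H : R} {K : ℝ}
    (hK : 0 ≤ K) {m n k : ℕ} (hH : ‖H‖ ≤ K * W k n) : ‖G₀ m (k + 1) * E k * H‖ ≤ K * a k * W m n :=
  calc ‖G₀ m (k + 1) * E k * H‖ ≤ ‖G₀ m (k + 1) * E k‖ * (K * W k n) :=
        (norm_mul_le _ _).trans (mul_le_mul_of_nonneg_left hH (norm_nonneg _))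
    _ = K * (‖G₀ m (k + 1) * E k‖ * W k n) := by ring
    _ ≤ K * a k * W m n := by
        rw [mul_assoc]; exact mul_le_mul_of_nonneg_left (h.norm_mul_mul_le m n k) hK

lemma norm_tsum_mul_le (h : IsAdmissiblePerturbation G₀ E W a q) {H : ℕ → R} {K : ℝ}
    (hK : 0 ≤ K) {n : ℕ} (hH : ∀ k, ‖H k‖ ≤ K * W k n) (m : ℕ) :
    ‖∑' k, G₀ m (k + 1) * E k * H k‖ ≤ K * q * W m n :=
  tsum_of_norm_bounded ((h.hasSum.mul_left K).mul_right (W m n))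
    fun k => h.norm_mul_le_of_norm_le hK (hH k)

lemma norm_neumannTerm_le (h : IsAdmissiblePerturbation G₀ E W a q) (p : ℕ) :
    ∀ m n, ‖neumannTerm G₀ E p m n‖ ≤ q ^ p * W m n := by
  induction p with
  | zero => simpa [neumannTerm] using h.norm_le
  | succ p ih =>
    intro m n
    rw [pow_succ, mul_comm (q ^ p)]
    exact (h.norm_tsum_mul_le (pow_nonneg h.q_nonneg p) (fun k => ih k n) m).trans_eq (by ring)

lemma norm_perturbedKernel_le (h : IsAdmissiblePerturbation G₀ E W a q) (m n : ℕ) :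
    ‖perturbedKernel G₀ E m n‖ ≤ (1 - q)⁻¹ * W m n :=
  tsum_of_norm_bounded ((hasSum_geometric_of_lt_one h.q_nonneg h.lt_one).mul_right (W m n))
    fun p => h.norm_neumannTerm_le p m n

lemma isBigO_perturbedKernel (h : IsAdmissiblePerturbation G₀ E W a q)
    (hWn : ∀ n, ∃ C, ∀ j, W j n ≤ C * W j 0) (n : ℕ) :
    (fun j => perturbedKernel G₀ E j n) =O[atTop] fun j => W j 0 := by
  obtain ⟨C, hC⟩ := hWn n
  refine isBigO_of_le' (c := (1 - q)⁻¹ * C) _ fun j => ?_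
  rw [Real.norm_of_nonneg (h.weight_nonneg j 0), mul_assoc]
  exact (h.norm_perturbedKernel_le j n).trans
    (mul_le_mul_of_nonneg_left (hC j) (inv_nonneg.mpr (sub_nonneg.mpr h.lt_one.le)))

variable [CompleteSpace R]

lemma summable_mul (h : IsAdmissiblePerturbation G₀ E W a q) {H : ℕ → R} {K : ℝ} (hK : 0 ≤ K)
    {n : ℕ} (hH : ∀ k, ‖H k‖ ≤ K * W k n) (m : ℕ) :
    Summable fun k => G₀ m (k + 1) * E k * H k :=
  .of_norm_bounded ((h.hasSum.summable.mul_left K).mul_right (W m n))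
    fun k => h.norm_mul_le_of_norm_le hK (hH k)

lemma summable_neumannTerm (h : IsAdmissiblePerturbation G₀ E W a q) (m n : ℕ) :
    Summable fun p => neumannTerm G₀ E p m n :=
  .of_norm_bounded ((summable_geometric_of_lt_one h.q_nonneg h.lt_one).mul_right (W m n))
    fun p => h.norm_neumannTerm_le p m n

lemma summable_mul_perturbedKernel (h : IsAdmissiblePerturbation G₀ E W a q) (m n : ℕ) :
    Summable fun k => G₀ m (k + 1) * E k * perturbedKernel G₀ E k n :=
  h.summable_mul (inv_nonneg.mpr (sub_nonneg.mpr h.lt_one.le))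
    (fun k => h.norm_perturbedKernel_le k n) m

lemma perturbedKernel_eq (h : IsAdmissiblePerturbation G₀ E W a q) (m n : ℕ) :
    perturbedKernel G₀ E m n
      = G₀ m n + ∑' k, G₀ m (k + 1) * E k * perturbedKernel G₀ E k n := by
  have hprod : Summable (Function.uncurry fun k p =>
      G₀ m (k + 1) * E k * neumannTerm G₀ E p k n) :=
    .of_norm_bounded (((h.hasSum.summable.mul_of_nonneg
        (summable_geometric_of_lt_one h.q_nonneg h.lt_one) h.nonneg
        fun p => pow_nonneg h.q_nonneg p).mul_right (W m n)))
      fun kp => (h.norm_mul_le_of_norm_le (pow_nonneg h.q_nonneg kp.2)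
        (h.norm_neumannTerm_le kp.2 kp.1 n)).trans_eq (by ring)
  calc perturbedKernel G₀ E m n
      = G₀ m n + ∑' p, ∑' k, G₀ m (k + 1) * E k * neumannTerm G₀ E p k n := by
        rw [perturbedKernel, (h.summable_neumannTerm m n).tsum_eq_zero_add]
        rfl
    _ = G₀ m n + ∑' k, ∑' p, G₀ m (k + 1) * E k * neumannTerm G₀ E p k n := by
        rw [hprod.tsum_comm]
    _ = G₀ m n + ∑' k, G₀ m (k + 1) * E k * perturbedKernel G₀ E k n := by
        congr 1
        exact tsum_congr fun k => (h.summable_neumannTerm k n).tsum_mul_left _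

lemma perturbedKernel_succ_left (h : IsAdmissiblePerturbation G₀ E W a q) {L : ℕ → R}
    (hG₀ : ∀ m n, G₀ (m + 1) n = L m * G₀ m n + if m + 1 = n then 1 else 0) (m n : ℕ) :
    perturbedKernel G₀ E (m + 1) n
      = (L m + E m) * perturbedKernel G₀ E m n + if m + 1 = n then 1 else 0 := by
  have hterm : ∀ k, G₀ (m + 1) (k + 1) * E k * perturbedKernel G₀ E k n
      = L m * (G₀ m (k + 1) * E k * perturbedKernel G₀ E k n)
        + if k = m then E m * perturbedKernel G₀ E m n else 0 := by
    intro k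
    by_cases hk : k = m
    · subst hk
      simp [add_mul, mul_assoc, hG₀]
    · rw [hG₀, if_neg (by omega), if_neg hk]
      simp [mul_assoc]
  have hsum := h.summable_mul_perturbedKernel m n
  rw [h.perturbedKernel_eq (m + 1) n, tsum_congr hterm,
    (hsum.mul_left (L m)).tsum_add (hasSum_ite_eq m _).summable, hsum.tsum_mul_left,
    (hasSum_ite_eq m _).tsum_eq, hG₀, h.perturbedKernel_eq m n]
  noncomm_ring

lemma mul_perturbedKernel_zero (h : IsAdmissiblePerturbation G₀ E W a q) {Q : R}
    (hQ : ∀ k, Q * G₀ 0 (k + 1) = 0) (n : ℕ) :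
    Q * perturbedKernel G₀ E 0 n = Q * G₀ 0 n := by
  rw [h.perturbedKernel_eq, mul_add, ← (h.summable_mul_perturbedKernel 0 n).tsum_mul_left]
  simp [← mul_assoc, hQ]

/-- Variation of constants: telescoping `G₀ m k H k` along a solution `H` of the perturbed
equation, and letting the endpoint go to infinity. -/
lemma eq_tsum_of_solution (h : IsAdmissiblePerturbation G₀ E W a q) {L : ℕ → R}
    (hright : ∀ m n, G₀ m (n + 1) * L n = G₀ m n - if m = n then 1 else 0)
    {H : ℕ → R} (hH : ∀ j, H (j + 1) = (L j + E j) * H j) (hH₀ : ∀ m, G₀ m 0 * H 0 = 0)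
    {K : ℝ} (hK0 : 0 ≤ K) (hK : ∀ j, ‖H j‖ ≤ K * W j 0)
    (hlim : ∀ m, Tendsto (fun M => ‖G₀ m M‖ * W M 0) atTop (𝓝 0)) (m : ℕ) :
    H m = ∑' k, G₀ m (k + 1) * E k * H k := by
  have hstep : ∀ k, G₀ m (k + 1) * H (k + 1) - G₀ m k * H k
      = G₀ m (k + 1) * E k * H k - if m = k then H k else 0 := by
    intro k
    rw [hH, ← mul_assoc, mul_add, add_mul, hright]
    split_ifs <;> noncomm_ring
  have htel : ∀ M, m < M →
      G₀ m M * H M + H m = ∑ k ∈ Finset.range M, G₀ m (k + 1) * E k * H k := by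
    intro M hM
    have := Finset.sum_range_sub (fun k => G₀ m k * H k) M
    simp only [hstep, Finset.sum_sub_distrib, Finset.sum_ite_eq, Finset.mem_range, if_pos hM,
      hH₀, sub_zero] at this
    rw [← this, sub_add_cancel]
  have hlim' : Tendsto (fun M => G₀ m M * H M) atTop (𝓝 0) := by
    refine squeeze_zero_norm (fun M => ?_) (by simpa using (hlim m).const_mul K)
    calc ‖G₀ m M * H M‖ ≤ ‖G₀ m M‖ * (K * W M 0) :=
          (norm_mul_le _ _).trans (mul_le_mul_of_nonneg_left (hK M) (norm_nonneg _))
      _ = K * (‖G₀ m M‖ * W M 0) := by ring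
  have := tendsto_nhds_unique_of_eventuallyEq (hlim'.add_const (H m))
    (h.summable_mul hK0 hK m).hasSum.tendsto_sum_nat
    ((eventually_gt_atTop m).mono htel)
  rwa [zero_add] at this

lemma boundedSolutionsVanish (h : IsAdmissiblePerturbation G₀ E W a q) {L : ℕ → R}
    (hright : ∀ m n, G₀ m (n + 1) * L n = G₀ m n - if m = n then 1 else 0)
    {Q : R} (hQ : ∀ m, G₀ m 0 * Q = G₀ m 0) (hW : ∀ j, W j 0 ≠ 0)
    (hlim : ∀ m, Tendsto (fun M => ‖G₀ m M‖ * W M 0) atTop (𝓝 0)) :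
    BoundedSolutionsVanish (fun j => L j + E j) Q (fun j => W j 0) := by
  intro H hH hQH hO
  rw [← Nat.cofinite_eq_atTop] at hO
  obtain ⟨K, hK⟩ := (isBigO_cofinite_iff fun j hj => absurd hj (hW j)).mp hO
  set K' := max K 0
  have hK' : ∀ j, ‖H j‖ ≤ K' * W j 0 := fun j => by
    refine (hK j).trans ?_
    rw [Real.norm_of_nonneg (h.weight_nonneg j 0)]
    exact mul_le_mul_of_nonneg_right (le_max_left _ _) (h.weight_nonneg j 0)
  have hH₀ : ∀ m, G₀ m 0 * H 0 = 0 := fun m => by rw [← hQ m, mul_assoc, hQH, mul_zero]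
  -- each use of the representation `H = ∑ G₀ E H` gains a factor `q`
  have hcontr : ∀ p j, ‖H j‖ ≤ K' * q ^ p * W j 0 := by
    intro p
    induction p with
    | zero => simpa using hK'
    | succ p ih =>
      intro j
      rw [h.eq_tsum_of_solution hright hH hH₀ (le_max_right K 0) hK' hlim j]
      exact (h.norm_tsum_mul_le (mul_nonneg (le_max_right K 0) (pow_nonneg h.q_nonneg p))
        ih j).trans_eq (by ring)
  funext j
  have hlim0 : Tendsto (fun p => K' * q ^ p * W j 0) atTop (𝓝 0) := by
    simpa using ((tendsto_pow_atTop_nhds_zero_of_lt_one h.q_nonneg h.lt_one).const_mul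
      K').mul_const (W j 0)
  exact norm_le_zero_iff.mp (ge_of_tendsto' hlim0 fun p => hcontr p j)

end IsAdmissiblePerturbation

end Perturbation

theorem Asymptotics.IsBigO.mul_const_right {α R F : Type*} [NormedRing R] [Norm F]
    {l : Filter α} {f : α → R} {g : α → F} (hf : f =O[l] g) (c : R) :
    (fun x => f x * c) =O[l] g :=
  (isBigO_of_le' l fun x => (norm_mul_le (f x) c).trans_eq (mul_comm _ _)).trans hf

/-! In each identity below, the difference of the two sides is, as a function of the first
index, an `O(u)` solution starting in `ker Q`. -/

namespace BoundedSolutionsVanish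

variable {R : Type*} [NormedRing R] {L : ℕ → R} {Q : R} {u : ℕ → ℝ} {G : ℕ → ℕ → R}

lemma succ_right (huniq : BoundedSolutionsVanish L Q u)
    (hleft : ∀ m n, G (m + 1) n = L m * G m n + if m + 1 = n then 1 else 0)
    (hQG : ∀ n, Q * G 0 n = if n = 0 then Q else 0)
    (hGu : ∀ n, (fun j => G j n) =O[atTop] u) (m n : ℕ) :
    G m (n + 1) * L n = G m n - if m = n then 1 else 0 := by
  have hH := huniq (fun j => G j (n + 1) * L n - G j n + if j = n then 1 else 0) ?_ ?_ ?_
  · have hm := congrFun hH m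
    simp only [Pi.zero_apply] at hm
    rw [← sub_eq_zero]
    convert hm using 1
    abel
  · intro j
    simp only [hleft]
    rcases eq_or_ne j n with rfl | hj
    · rw [if_pos rfl, if_pos rfl, if_neg (Nat.succ_ne_self j)]
      noncomm_ring
    · simp only [if_neg hj, if_neg (show j + 1 ≠ n + 1 by omega)]
      noncomm_ring
  · rcases eq_or_ne n 0 with rfl | hn
    · simp [mul_add, mul_sub, ← mul_assoc, hQG]
    · simp [mul_sub, ← mul_assoc, hQG, hn, Ne.symm hn]
  · refine (((hGu (n + 1)).mul_const_right (L n)).sub (hGu n)).congr' ?_ EventuallyEq.rfl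
    filter_upwards [eventually_gt_atTop n] with j hj
    rw [if_neg hj.ne', add_zero]

lemma isGreenKernel (huniq : BoundedSolutionsVanish L Q u)
    (hleft : ∀ m n, G (m + 1) n = L m * G m n + if m + 1 = n then 1 else 0)
    (hQG : ∀ n, Q * G 0 n = if n = 0 then Q else 0)
    (hGu : ∀ n, (fun j => G j n) =O[atTop] u) : IsGreenKernel L G :=
  ⟨hleft, huniq.succ_right hleft hQG hGu⟩

lemma mul_diag (huniq : BoundedSolutionsVanish L Q u) (hG : IsGreenKernel L G)
    (hQG : ∀ n, Q * G 0 n = if n = 0 then Q else 0)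
    (hGu : ∀ n, (fun j => G j n) =O[atTop] u) (j n : ℕ) :
    G j n * G n n = if n ≤ j then G j n else 0 := by
  have hH := huniq (fun j => G j n * G n n - if n ≤ j then G j n else 0) ?_ ?_ ?_
  · exact sub_eq_zero.mp (congrFun hH j)
  · intro j
    rcases lt_trichotomy (j + 1) n with h | rfl | h
    · simp only [hG.succ_left, if_neg h.ne, if_neg (not_le.mpr h), if_neg (by omega : ¬n ≤ j)]
      noncomm_ring
    · simp only [hG.succ_left, le_refl, if_true, if_neg (by omega : ¬j + 1 ≤ j)]
      noncomm_ring
    · simp only [hG.succ_left, if_neg h.ne', if_pos h.le, if_pos (by omega : n ≤ j)]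
      noncomm_ring
  · rcases eq_or_ne n 0 with rfl | hn
    · simp [mul_sub, ← mul_assoc, hQG]
    · simp [← mul_assoc, hQG, hn]
  · refine (((hGu n).mul_const_right (G n n)).sub (hGu n)).congr' ?_ EventuallyEq.rfl
    filter_upwards [eventually_ge_atTop n] with j hj
    rw [if_pos hj]

lemma diag_mul (huniq : BoundedSolutionsVanish L Q u) (hG : IsGreenKernel L G)
    (hQG : ∀ n, Q * G 0 n = if n = 0 then Q else 0)
    (hGu : ∀ n, (fun j => G j n) =O[atTop] u) {m n : ℕ} (hmn : m < n) :
    G m m * G m n = 0 := by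
  have hH := huniq (fun j => G j m * G m n + if j < m then G j n else 0) ?_ ?_ ?_
  · simpa using congrFun hH m
  · intro j
    rcases lt_trichotomy (j + 1) m with h | rfl | h
    · simp only [hG.succ_left, if_neg h.ne, if_pos h, if_pos (by omega : j < m),
        if_neg (by omega : j + 1 ≠ n)]
      noncomm_ring
    · simp only [hG.succ_left, lt_irrefl, if_false, if_true, if_pos (Nat.lt_succ_self j),
        if_neg hmn.ne]
      noncomm_ring
    · simp only [hG.succ_left, if_neg h.ne', if_neg (by omega : ¬j + 1 < m),
        if_neg (by omega : ¬j < m)]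
      noncomm_ring
  · rcases eq_or_ne m 0 with rfl | hm
    · simp [← mul_assoc, hQG, hmn.ne']
    · simp [mul_add, ← mul_assoc, hQG, hm, Nat.pos_of_ne_zero hm, (hmn.trans_le' m.zero_le).ne']
  · refine ((hGu m).mul_const_right (G m n)).congr' ?_ EventuallyEq.rfl
    filter_upwards [eventually_ge_atTop m] with j hj
    rw [if_neg (not_lt.mpr hj), add_zero]

end BoundedSolutionsVanish

section Robustness

variable {R : Type*} [NormedRing R] [CompleteSpace R] {A E P : ℕ → R} {𝒜 B : ℕ → ℕ → R}
  {W : ℕ → ℕ → ℝ} {a : ℕ → ℝ} {q : ℝ}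

namespace IsAdmissiblePerturbation

theorem isGreenKernel_and_isInvariantSplitting
    (h : IsAdmissiblePerturbation (greenKernel 𝒜 P B) E W a q) (h𝒜 : IsEvolution A 𝒜)
    (hs : IsInvariantSplitting A P B) (hW0 : ∀ j, W j 0 ≠ 0)
    (hWn : ∀ n, ∃ C, ∀ j, W j n ≤ C * W j 0)
    (hlim : ∀ m, Tendsto (fun M => ‖greenKernel 𝒜 P B m M‖ * W M 0) atTop (𝓝 0)) :
    letI G := perturbedKernel (greenKernel 𝒜 P B) E
    IsGreenKernel (fun n => A n + E n) G ∧ IsInvariantSplitting (fun n => A n + E n)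
      (fun n => G n n) (fun m n => (if m = n then 1 else 0) - G m n) := by
  have hG₀ := isGreenKernel_greenKernel h𝒜 hs
  have huniq := h.boundedSolutionsVanish hG₀.succ_right (greenKernel_zero_mul_proj hs) hW0 hlim
  have hQG : ∀ n, P 0 * perturbedKernel (greenKernel 𝒜 P B) E 0 n = if n = 0 then P 0 else 0 := by
    intro n
    rw [h.mul_perturbedKernel_zero fun k => by
      rw [proj_mul_greenKernel_zero h𝒜 hs, if_neg k.succ_ne_zero]]
    exact proj_mul_greenKernel_zero h𝒜 hs n
  have hGu := h.isBigO_perturbedKernel hWn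
  have hG := huniq.isGreenKernel (h.perturbedKernel_succ_left hG₀.succ_left) hQG hGu
  exact ⟨hG, hG.isInvariantSplitting (fun n => by simpa using huniq.mul_diag hG hQG hGu n n)
    fun m n hmn => huniq.diag_mul hG hQG hGu hmn⟩

end IsAdmissiblePerturbation

end Robustness

section GrowthRates

variable {μ ν γ : ℕ → ℝ}

lemma norm_greenKernel_le {R : Type*} [NormedRing R] {𝒜 B : ℕ → ℕ → R} {P : ℕ → R}
    {D lam : ℝ} (hμ : ∀ n, 0 < μ n) (hmono : Monotone μ)
    (hS : ∀ m n, n ≤ m → ‖𝒜 m n * P n‖ ≤ D * ν n * (μ m / μ n) ^ (-lam))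
    (hU : ∀ m n, m ≤ n → ‖B m n‖ ≤ D * ν n * (μ n / μ m) ^ (-lam)) (m n : ℕ) :
    ‖greenKernel 𝒜 P B m n‖ ≤ D * ν n * growthWeight μ lam m n := by
  unfold greenKernel
  split_ifs with h
  · rw [growthWeight.eq_rpow hμ hmono h]
    exact hS m n h
  · rw [norm_neg, growthWeight.comm, growthWeight.eq_rpow hμ hmono (le_of_not_ge h)]
    exact hU m n (le_of_not_ge h)

lemma tendsto_mul_rpow_neg {ε lam M₀ : ℝ} (hμ : ∀ n, 0 < μ n) (hμtop : Tendsto μ atTop atTop)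
    (hν : ∀ n, 0 ≤ ν n) (hM₀ : ∀ n, μ n ^ (-ε) * ν n ≤ M₀) (hεlam : ε < lam) :
    Tendsto (fun n => ν n * μ n ^ (-lam)) atTop (𝓝 0) := by
  have hpow : Tendsto (fun n => μ n ^ (-(lam - ε))) atTop (𝓝 0) :=
    (tendsto_rpow_neg_atTop (sub_pos.mpr hεlam)).comp hμtop
  refine squeeze_zero (fun n => mul_nonneg (hν n) (Real.rpow_nonneg (hμ n).le _)) (fun n => ?_)
    (by simpa only [mul_zero] using hpow.const_mul M₀)
  calc ν n * μ n ^ (-lam) = μ n ^ (-ε) * ν n * μ n ^ (-(lam - ε)) := by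
        rw [mul_comm (μ n ^ (-ε)), mul_assoc, ← Real.rpow_add (hμ n)]
        ring_nf
    _ ≤ M₀ * μ n ^ (-(lam - ε)) :=
        mul_le_mul_of_nonneg_right (hM₀ n) (Real.rpow_nonneg (hμ n).le _)

lemma tendsto_norm_greenKernel_mul {R : Type*} [NormedRing R] {𝒜 B : ℕ → ℕ → R} {P : ℕ → R}
    {D lam β : ℝ} (hμ : ∀ n, 0 < μ n) (hD : 0 ≤ D) (hν : ∀ n, 0 ≤ ν n) (hβ : 0 ≤ β)
    (hU : ∀ m n, m ≤ n → ‖B m n‖ ≤ D * ν n * (μ n / μ m) ^ (-lam))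
    (hνμ : Tendsto (fun n => ν n * μ n ^ (-lam)) atTop (𝓝 0)) (m : ℕ) :
    Tendsto (fun M => ‖greenKernel 𝒜 P B m M‖ * (D * ν 0 * growthWeight μ β M 0)) atTop
      (𝓝 0) := by
  have hD0 : 0 ≤ D * ν 0 := mul_nonneg hD (hν 0)
  have hC := hνμ.const_mul (D * μ m ^ lam * (D * ν 0))
  rw [mul_zero] at hC
  refine squeeze_zero' (.of_forall fun M =>
    mul_nonneg (norm_nonneg _) (mul_nonneg hD0 growthWeight.pos.le)) ?_ hC
  filter_upwards [eventually_gt_atTop m] with M hM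
  have hB : ‖greenKernel 𝒜 P B m M‖ ≤ D * μ m ^ lam * (ν M * μ M ^ (-lam)) := by
    rw [greenKernel, if_neg (not_le.mpr hM), norm_neg]
    refine (hU m M hM.le).trans_eq ?_
    rw [Real.div_rpow (hμ M).le (hμ m).le, Real.rpow_neg (hμ m).le, div_inv_eq_mul]
    ring
  calc ‖greenKernel 𝒜 P B m M‖ * (D * ν 0 * growthWeight μ β M 0)
      ≤ D * μ m ^ lam * (ν M * μ M ^ (-lam)) * (D * ν 0 * 1) :=
        mul_le_mul hB (mul_le_mul_of_nonneg_left (growthWeight.le_one hβ) hD0)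
          (mul_nonneg hD0 growthWeight.pos.le) ((norm_nonneg _).trans hB)
    _ = D * μ m ^ lam * (D * ν 0) * (ν M * μ M ^ (-lam)) := by ring

lemma weight_le_mul_weight_zero {D t : ℝ} (hD : 0 ≤ D) (ht : 0 ≤ t) (hν : ∀ n, 0 < ν n)
    (j n : ℕ) :
    D * ν n * growthWeight μ t j n
      ≤ ν n / (ν 0 * growthWeight μ t n 0) * (D * ν 0 * growthWeight μ t j 0) :=
  calc D * ν n * growthWeight μ t j n
      ≤ D * ν n * (growthWeight μ t j 0 / growthWeight μ t n 0) :=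
        mul_le_mul_of_nonneg_left (growthWeight.le_div ht j n 0) (mul_nonneg hD (hν n).le)
    _ = _ := by
        have := (hν 0).ne'
        have : growthWeight μ t n 0 ≠ 0 := growthWeight.pos.ne'
        field_simp

lemma mul_le_growthWeight_succ {β c x : ℝ} (hμ : ∀ n, 0 < μ n) (hmono : Monotone μ)
    (hν : ∀ n, 0 < ν n) {k : ℕ} (hx : x ≤ c * γ k * μ k ^ β / (ν (k + 1) * μ (k + 1) ^ β)) :
    x * ν (k + 1) ≤ c * γ k * growthWeight μ β (k + 1) k := by
  have hμβ : μ (k + 1) ^ β ≠ 0 := (Real.rpow_pos_of_pos (hμ _) β).ne'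
  have hνk : ν (k + 1) ≠ 0 := (hν _).ne'
  rw [growthWeight.eq_rpow hμ hmono k.le_succ, Real.rpow_neg (div_pos (hμ _) (hμ _)).le,
    Real.div_rpow (hμ _).le (hμ _).le, inv_div]
  calc x * ν (k + 1) ≤ c * γ k * μ k ^ β / (ν (k + 1) * μ (k + 1) ^ β) * ν (k + 1) :=
        mul_le_mul_of_nonneg_right hx (hν _).le
    _ = c * γ k * (μ k ^ β / μ (k + 1) ^ β) := by field_simp

lemma isAdmissiblePerturbation_of_norm_le {R : Type*} [NormedRing R] {G₀ : ℕ → ℕ → R}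
    {E : ℕ → R} {D β c Γ : ℝ} (hG₀ : ∀ m n, ‖G₀ m n‖ ≤ D * ν n * growthWeight μ β m n)
    (hE : ∀ k, ‖E k‖ * ν (k + 1) ≤ c * γ k * growthWeight μ β (k + 1) k)
    (hν : ∀ n, 0 < ν n) (hβ : 0 ≤ β) (hD : 0 ≤ D) (hc : 0 ≤ c) (hγ : ∀ k, 0 ≤ γ k)
    (hΓ : HasSum γ Γ) (hq : D * c * Γ < 1) :
    IsAdmissiblePerturbation G₀ E (fun m n => D * ν n * growthWeight μ β m n)
      (fun k => D * c * γ k) (D * c * Γ) where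
  norm_le := hG₀
  norm_mul_mul_le m n k := by
    have hW : 0 ≤ D * ν n * growthWeight μ β k n :=
      mul_nonneg (mul_nonneg hD (hν n).le) growthWeight.pos.le
    have hρ : growthWeight μ β m (k + 1) * growthWeight μ β (k + 1) k * growthWeight μ β k n
        ≤ growthWeight μ β m n :=
      (mul_le_mul_of_nonneg_right (growthWeight.mul_le hβ m (k + 1) k) growthWeight.pos.le).trans
        (growthWeight.mul_le hβ m k n)
    calc ‖G₀ m (k + 1) * E k‖ * (D * ν n * growthWeight μ β k n)
        ≤ D * ν (k + 1) * growthWeight μ β m (k + 1) * ‖E k‖ * (D * ν n * growthWeight μ β k n) :=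
          mul_le_mul_of_nonneg_right ((norm_mul_le _ _).trans
            (mul_le_mul_of_nonneg_right (hG₀ _ _) (norm_nonneg _))) hW
      _ = D * growthWeight μ β m (k + 1) * (‖E k‖ * ν (k + 1))
            * (D * ν n * growthWeight μ β k n) := by ring
      _ ≤ D * growthWeight μ β m (k + 1) * (c * γ k * growthWeight μ β (k + 1) k)
            * (D * ν n * growthWeight μ β k n) :=
          mul_le_mul_of_nonneg_right (mul_le_mul_of_nonneg_left (hE k)
            (mul_nonneg hD growthWeight.pos.le)) hW
      _ = D * c * γ k * (D * ν n) * (growthWeight μ β m (k + 1) * growthWeight μ β (k + 1) k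
            * growthWeight μ β k n) := by ring
      _ ≤ D * c * γ k * (D * ν n) * growthWeight μ β m n :=
          mul_le_mul_of_nonneg_left hρ
            (mul_nonneg (mul_nonneg (mul_nonneg hD hc) (hγ k)) (mul_nonneg hD (hν n).le))
      _ = D * c * γ k * (D * ν n * growthWeight μ β m n) := by ring
  nonneg k := mul_nonneg (mul_nonneg hD hc) (hγ k)
  hasSum := hΓ.mul_left (D * c)
  lt_one := hq

end GrowthRates

section Dichotomy

variable {X : Type*} [NormedAddCommGroup X]

lemma mul_mul_one_sub_eq_one_sub_iff {𝕜 : Type*} [NontriviallyNormedField 𝕜] [NormedSpace 𝕜 X]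
    {A B P : X →L[𝕜] X} (hP : P * P = P) :
    B * A * (1 - P) = 1 - P ↔ ∀ v, P v = 0 → B (A v) = v := by
  constructor
  · intro h v hv
    simpa [hv] using congr($h v)
  · intro h
    ext v
    have hv : P (v - P v) = 0 := by
      rw [map_sub, sub_eq_zero]
      exact congr($hP v).symm
    simpa using h _ hv

variable [NormedSpace ℝ X]

def IsMuNuDichotomy (μ ν : ℕ → ℝ) (L : ℕ → X →L[ℝ] X) (𝒜 : ℕ → ℕ → X →L[ℝ] X)
    (P : ℕ → X →L[ℝ] X) (B : ℕ → ℕ → X →L[ℝ] X) (D lam : ℝ) : Prop :=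
  (∀ n, (P n).comp (P n) = P n)
  ∧ (∀ n, (L n).comp (P n) = (P (n + 1)).comp (L n))
  ∧ (∀ n, B n n = 1 - P n)
  ∧ (∀ m n, m < n → (L m).comp (B m n) = B (m + 1) n)
  ∧ (∀ m n, m ≤ n → (P m).comp (B m n) = 0)
  ∧ (∀ n v, P n v = 0 → B n (n + 1) (L n v) = v)
  ∧ (∀ m n, n ≤ m → ‖(𝒜 m n).comp (P n)‖ ≤ D * ν n * (μ m / μ n) ^ (-lam))
  ∧ (∀ m n, m ≤ n → ‖B m n‖ ≤ D * ν n * (μ n / μ m) ^ (-lam))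

lemma exists_isMuNuDichotomy_of_isGreenKernel {μ ν : ℕ → ℝ} {L : ℕ → X →L[ℝ] X}
    {𝒜 G : ℕ → ℕ → X →L[ℝ] X} {C β : ℝ} (hμ : ∀ n, 0 < μ n) (hmono : Monotone μ)
    (hν : ∀ n, 1 ≤ ν n) (hC : 0 ≤ C) (hβ : 0 < β) (h𝒜 : IsEvolution L 𝒜)
    (hG : IsGreenKernel L G)
    (hs : IsInvariantSplitting L (fun n => G n n) fun m n => (if m = n then 1 else 0) - G m n)
    (hGle : ∀ m n, ‖G m n‖ ≤ C * ν n * growthWeight μ β m n) :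
    ∃ P' B' D' lam', 0 < D' ∧ 0 < lam' ∧ IsMuNuDichotomy μ ν L 𝒜 P' B' D' lam' := by
  have hδ : ∀ m n, ‖(if m = n then 1 else 0 : X →L[ℝ] X)‖ ≤ ν n * growthWeight μ β m n := by
    intro m n
    split_ifs with h
    · subst h
      rw [growthWeight.self, mul_one]
      exact ContinuousLinearMap.norm_id_le.trans (hν m)
    · simpa using mul_nonneg (zero_le_one.trans (hν n)) growthWeight.pos.le
  refine ⟨fun n => G n n, fun m n => (if m = n then 1 else 0) - G m n, C + 1, β, by linarith, hβ,
    hs.proj_mul_self, hs.step_mul_proj, hs.bwd_self, hs.step_mul_bwd, hs.proj_mul_bwd,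
    fun n => (mul_mul_one_sub_eq_one_sub_iff (hs.proj_mul_self n)).mp (hs.bwd_mul_step n),
    fun m n hnm => ?_, fun m n hmn => ?_⟩
  · rw [← growthWeight.eq_rpow hμ hmono hnm]
    calc ‖𝒜 m n * G n n‖ = ‖G m n‖ := by rw [hG.evolution_mul_diag h𝒜 hnm]
      _ ≤ C * ν n * growthWeight μ β m n + ν n * growthWeight μ β m n :=
          le_add_of_le_of_nonneg (hGle m n)
            (mul_nonneg (zero_le_one.trans (hν n)) growthWeight.pos.le)
      _ = (C + 1) * ν n * growthWeight μ β m n := by ring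
  · rw [← growthWeight.eq_rpow hμ hmono hmn, ← growthWeight.comm]
    calc ‖(if m = n then 1 else 0) - G m n‖
        ≤ ν n * growthWeight μ β m n + C * ν n * growthWeight μ β m n :=
          (norm_sub_le _ _).trans (add_le_add (hδ m n) (hGle m n))
      _ = (C + 1) * ν n * growthWeight μ β m n := by ring

end Dichotomy

theorem stmt16_general {X : Type*} [NormedAddCommGroup X] [NormedSpace ℝ X] [CompleteSpace X]
    (μ : ℕ → ℝ) (hμpos : ∀ n, 0 < μ n) (hμmono : StrictMono μ)
    (hμtop : Filter.Tendsto μ Filter.atTop Filter.atTop)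
    (ν : ℕ → ℝ) (hν : ∀ n, 1 ≤ ν n)
    (γ : ℕ → ℝ) (hγ : ∀ n, 0 < γ n) (hγsum : Summable γ)
    (A : ℕ → X →L[ℝ] X) (𝒜 : ℕ → ℕ → X →L[ℝ] X)
    (h𝒜id : ∀ n, 𝒜 n n = 1)
    (h𝒜succ : ∀ m n, n ≤ m → 𝒜 (m + 1) n = (A m).comp (𝒜 m n))
    -- the `(μ,ν)`-dichotomy of the unperturbed equation
    (P : ℕ → X →L[ℝ] X) (hP : ∀ n, (P n).comp (P n) = P n)
    (hPA : ∀ n, (A n).comp (P n) = (P (n + 1)).comp (A n))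
    (B : ℕ → ℕ → X →L[ℝ] X)
    (hBdiag : ∀ n, B n n = 1 - P n)
    (hBstep : ∀ m n, m < n → (A m).comp (B m n) = B (m + 1) n)
    (hBker : ∀ m n, m ≤ n → (P m).comp (B m n) = 0)
    (hBinv : ∀ n v, P n v = 0 → B n (n + 1) (A n v) = v)
    (D lam : ℝ) (hD : 0 < D)
    (hS : ∀ m n, n ≤ m → ‖(𝒜 m n).comp (P n)‖ ≤ D * ν n * (μ m / μ n) ^ (-lam))
    (hU : ∀ m n, m ≤ n → ‖B m n‖ ≤ D * ν n * (μ n / μ m) ^ (-lam))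
    (ε : ℝ) (hε0 : 0 ≤ ε) (hεlam : ε < lam)
    (hμν : ∃ M, ∀ n, μ n ^ (-ε) * ν n ≤ M)
    (β : ℝ) (hβ1 : 0 < β) (hβ2 : β < lam - ε) :
    ∃ c > (0 : ℝ), ∀ B' : ℕ → X →L[ℝ] X,
      (∀ n, ‖B' n‖ ≤ c * γ n * μ n ^ β / (ν (n + 1) * μ (n + 1) ^ β)) →
      ∀ 𝒜' : ℕ → ℕ → X →L[ℝ] X,
        (∀ n, 𝒜' n n = 1) →
        (∀ m n, n ≤ m → 𝒜' (m + 1) n = (A m + B' m).comp (𝒜' m n)) →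
        ∃ (P' : ℕ → X →L[ℝ] X) (B'' : ℕ → ℕ → X →L[ℝ] X) (D' lam' : ℝ),
          0 < D' ∧ 0 < lam'
          ∧ (∀ n, (P' n).comp (P' n) = P' n)
          ∧ (∀ n, (A n + B' n).comp (P' n) = (P' (n + 1)).comp (A n + B' n))
          ∧ (∀ n, B'' n n = 1 - P' n)
          ∧ (∀ m n, m < n → (A m + B' m).comp (B'' m n) = B'' (m + 1) n)
          ∧ (∀ m n, m ≤ n → (P' m).comp (B'' m n) = 0)
          ∧ (∀ n v, P' n v = 0 → B'' n (n + 1) ((A n + B' n) v) = v)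
          ∧ (∀ m n, n ≤ m →
              ‖(𝒜' m n).comp (P' n)‖ ≤ D' * ν n * (μ m / μ n) ^ (-lam'))
          ∧ (∀ m n, m ≤ n →
              ‖B'' m n‖ ≤ D' * ν n * (μ n / μ m) ^ (-lam')) := by
  obtain ⟨M₀, hM₀⟩ := hμν
  obtain ⟨Γ, hΓ⟩ := hγsum
  have hν₀ : ∀ n, 0 < ν n := fun n => one_pos.trans_le (hν n)
  have hΓ₀ : 0 < Γ := hΓ.tsum_eq ▸ hΓ.summable.tsum_pos (fun n => (hγ n).le) 0 (hγ 0)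
  refine ⟨(2 * D * Γ)⁻¹, by positivity, fun B' hB' 𝒜' h𝒜'id h𝒜'succ => ?_⟩
  have hq : D * (2 * D * Γ)⁻¹ * Γ = 1 / 2 := by field_simp
  have hs : IsInvariantSplitting A P B := ⟨hP, hPA, hBdiag, hBstep, hBker,
    fun n => (mul_mul_one_sub_eq_one_sub_iff (hP n)).mpr (hBinv n)⟩
  have hadm := isAdmissiblePerturbation_of_norm_le
    (fun m n => (norm_greenKernel_le hμpos hμmono.monotone hS hU m n).trans
      (mul_le_mul_of_nonneg_left (growthWeight.anti (by linarith)) (mul_nonneg hD.le (hν₀ n).le)))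
    (fun k => mul_le_growthWeight_succ hμpos hμmono.monotone hν₀ (hB' k)) hν₀ hβ1.le hD.le
    (by positivity) (fun k => (hγ k).le) hΓ (by linarith)
  obtain ⟨hG, hs'⟩ := hadm.isGreenKernel_and_isInvariantSplitting ⟨h𝒜id, h𝒜succ⟩ hs
    (fun j => (mul_pos (mul_pos hD (hν₀ 0)) growthWeight.pos).ne')
    (fun n => ⟨_, fun j => weight_le_mul_weight_zero hD.le hβ1.le hν₀ j n⟩)
    (tendsto_norm_greenKernel_mul hμpos hD.le (fun n => (hν₀ n).le) hβ1.le hU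
      (tendsto_mul_rpow_neg hμpos hμtop (fun n => (hν₀ n).le) hM₀ hεlam))
  exact exists_isMuNuDichotomy_of_isGreenKernel (C := 2 * D) hμpos hμmono.monotone hν
    (by positivity) hβ1 ⟨h𝒜'id, h𝒜'succ⟩ hG hs' fun m n =>
      (hadm.norm_perturbedKernel_le m n).trans_eq (by rw [hq]; ring)

/-- Robustness of `(μ,ν)`-dichotomies: let `(γ_n)` be positive with
`Σ γ_n < ∞`, suppose `x_{n+1} = A_n x_n` admits a `(μ,ν)`-dichotomy with
constants `D, λ > 0` (projections `P`, backward Green operators `B`), suppose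
`sup_n μ_n^{-ε} ν_n < ∞` for some `ε ∈ [0,λ)`, and fix `β ∈ (0, λ−ε)`.
Then for `c > 0` sufficiently small, every perturbation `(B'_n)` with
`‖B'_n‖ ≤ c γ_n μ_n^β / (ν_{n+1} μ_{n+1}^β)` yields a perturbed equation
`x_{n+1} = (A_n + B'_n) x_n` which again admits a `(μ,ν)`-dichotomy
(for some constants `D', λ' > 0`). -/
theorem stmt16 {X : Type*} [NormedAddCommGroup X] [NormedSpace ℝ X] [CompleteSpace X]
    (μ : ℕ → ℝ) (hμpos : ∀ n, 0 < μ n) (hμmono : StrictMono μ)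
    (hμtop : Filter.Tendsto μ Filter.atTop Filter.atTop)
    (ν : ℕ → ℝ) (hν : ∀ n, 1 ≤ ν n)
    (γ : ℕ → ℝ) (hγ : ∀ n, 0 < γ n) (hγsum : Summable γ)
    (A : ℕ → X →L[ℝ] X) (𝒜 : ℕ → ℕ → X →L[ℝ] X)
    (h𝒜id : ∀ n, 𝒜 n n = 1)
    (h𝒜succ : ∀ m n, n ≤ m → 𝒜 (m + 1) n = (A m).comp (𝒜 m n))
    -- the `(μ,ν)`-dichotomy of the unperturbed equation
    (P : ℕ → X →L[ℝ] X) (hP : ∀ n, (P n).comp (P n) = P n)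
    (hPA : ∀ n, (A n).comp (P n) = (P (n + 1)).comp (A n))
    (B : ℕ → ℕ → X →L[ℝ] X)
    (hBdiag : ∀ n, B n n = 1 - P n)
    (hBstep : ∀ m n, m < n → (A m).comp (B m n) = B (m + 1) n)
    (hBker : ∀ m n, m ≤ n → (P m).comp (B m n) = 0)
    (hBinv : ∀ n v, P n v = 0 → B n (n + 1) (A n v) = v)
    (D lam : ℝ) (hD : 0 < D) (hlam : 0 < lam)
    (hS : ∀ m n, n ≤ m → ‖(𝒜 m n).comp (P n)‖ ≤ D * ν n * (μ m / μ n) ^ (-lam))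
    (hU : ∀ m n, m ≤ n → ‖B m n‖ ≤ D * ν n * (μ n / μ m) ^ (-lam))
    (ε : ℝ) (hε0 : 0 ≤ ε) (hεlam : ε < lam)
    (hμν : ∃ M, ∀ n, μ n ^ (-ε) * ν n ≤ M)
    (β : ℝ) (hβ1 : 0 < β) (hβ2 : β < lam - ε) :
    ∃ c > (0 : ℝ), ∀ B' : ℕ → X →L[ℝ] X,
      (∀ n, ‖B' n‖ ≤ c * γ n * μ n ^ β / (ν (n + 1) * μ (n + 1) ^ β)) →
      ∀ 𝒜' : ℕ → ℕ → X →L[ℝ] X,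
        (∀ n, 𝒜' n n = 1) →
        (∀ m n, n ≤ m → 𝒜' (m + 1) n = (A m + B' m).comp (𝒜' m n)) →
        ∃ (P' : ℕ → X →L[ℝ] X) (B'' : ℕ → ℕ → X →L[ℝ] X) (D' lam' : ℝ),
          0 < D' ∧ 0 < lam'
          ∧ (∀ n, (P' n).comp (P' n) = P' n)
          ∧ (∀ n, (A n + B' n).comp (P' n) = (P' (n + 1)).comp (A n + B' n))
          ∧ (∀ n, B'' n n = 1 - P' n)
          ∧ (∀ m n, m < n → (A m + B' m).comp (B'' m n) = B'' (m + 1) n)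
          ∧ (∀ m n, m ≤ n → (P' m).comp (B'' m n) = 0)
          ∧ (∀ n v, P' n v = 0 → B'' n (n + 1) ((A n + B' n) v) = v)
          ∧ (∀ m n, n ≤ m →
              ‖(𝒜' m n).comp (P' n)‖ ≤ D' * ν n * (μ m / μ n) ^ (-lam'))
          ∧ (∀ m n, m ≤ n →
              ‖B'' m n‖ ≤ D' * ν n * (μ n / μ m) ^ (-lam')) :=
  stmt16_general μ hμpos hμmono hμtop ν hν γ hγ hγsum A 𝒜 h𝒜id h𝒜succ P hP hPA B hBdiag hBstep hBker
    hBinv D lam hD hS hU ε hε0 hεlam hμν β hβ1 hβ2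
end

section
/- For the two-sided stable/unstable splitting under admissibility: define S(n) = {v ∈ X : sup_{m≥n} ‖𝒜(m,n)v‖ < ∞} and U(n) = {v ∈ X : there exists (z_m)_{m≤n} with z_n = v, z_m = A_{m-1}z_{m-1} for m ≤ n, and sup_{m≤n}‖z_m‖ < ∞}. Assuming the three two-sided admissibility hypotheses (unique solvability in (ℓ^1_β, ℓ^∞_β), (ℓ^1_{-β}, ℓ^∞_{-β}), and (ℓ^1_{β,|·|}, ℓ^∞_{β,|·|})), one has X = S(n) ⊕ U(n) for every n ∈ ℤ. -/
/-!
A full orbit that is bounded in both time directions is a bounded solution of the homogeneous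
equation, so admissibility of `(ℓ¹_{β,|·|}, ℓ^∞_{β,|·|})` (whose weight is at most `1`) forces
it to vanish; this gives `S(n) ∩ U(n) = 0`. For `v ∈ X`, the solutions in `ℓ^∞_β` and in
`ℓ^∞_{-β}` of the equation with right-hand side `v` at time `n` both lie in `ℓ^∞_{β,|·|}`, so
they coincide, and the common solution `x` is bounded. Then `x_n ∈ S(n)`, since `x` is a
forward orbit from time `n`, and `v - x_n ∈ U(n)`, since `-x` is a backward orbit up to time
`n` whose value at `n` is corrected by the jump `v`.
-/

theorem AddSubgroup.existsUnique_add_of_disjoint {G : Type*} [AddCommGroup G]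
    {P Q : AddSubgroup G} (h : Disjoint P Q) {v p q : G} (hp : p ∈ P) (hq : q ∈ Q)
    (hv : v = p + q) : ∃! r : G × G, r.1 ∈ P ∧ r.2 ∈ Q ∧ v = r.1 + r.2 := by
  refine ⟨(p, q), ⟨hp, hq, hv⟩, ?_⟩
  rintro ⟨p', q'⟩ ⟨hp', hq', hv'⟩
  have hdiff : p' - p = q - q' := by rw [sub_eq_sub_iff_add_eq_add, ← hv', hv, add_comm]
  have hp0 : p' - p = 0 :=
    AddSubgroup.disjoint_def.1 h (sub_mem hp' hp) (hdiff ▸ sub_mem hq hq')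
  rw [sub_eq_zero] at hp0
  subst hp0
  rw [hv, add_left_cancel_iff] at hv'
  rw [hv']

namespace DiscreteAdmissibility

variable {X : Type*} [NormedAddCommGroup X]

def WeightedBounded (w : ℤ → ℝ) (x : ℤ → X) : Prop :=
  ∃ C, ∀ n, w n * ‖x n‖ ≤ C

theorem WeightedBounded.mono {w w' : ℤ → ℝ} {x : ℤ → X} (hx : WeightedBounded w' x)
    (h : ∀ n, w n ≤ w' n) : WeightedBounded w x :=
  let ⟨C, hC⟩ := hx
  ⟨C, fun n => (mul_le_mul_of_nonneg_right (h n) (norm_nonneg _)).trans (hC n)⟩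

theorem WeightedBounded.bounded_of_one_le_or {w w' : ℤ → ℝ} {x : ℤ → X}
    (hx : WeightedBounded w x) (hx' : WeightedBounded w' x) (h : ∀ n, 1 ≤ w n ∨ 1 ≤ w' n) :
    ∃ C, ∀ n, ‖x n‖ ≤ C := by
  obtain ⟨C, hC⟩ := hx
  obtain ⟨C', hC'⟩ := hx'
  refine ⟨max C C', fun n => ?_⟩
  rcases h n with h | h
  · exact le_max_of_le_left ((le_mul_of_one_le_left (norm_nonneg _) h).trans (hC n))
  · exact le_max_of_le_right ((le_mul_of_one_le_left (norm_nonneg _) h).trans (hC' n))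

theorem one_le_rpow_or_one_le_rpow_neg {a : ℝ} (ha : 0 < a) (β : ℝ) :
    1 ≤ a ^ β ∨ 1 ≤ a ^ (-β) := by
  rw [Real.rpow_neg ha.le]
  rcases le_or_gt 1 (a ^ β) with h | h
  · exact Or.inl h
  · exact Or.inr ((one_le_inv₀ (Real.rpow_pos_of_pos ha β)).2 h.le)

/-- The weight of `ℓ^∞_{γ,|·|}`. -/
noncomputable def splitWeight (μ : ℤ → ℝ) (n₀ : ℤ) (γ : ℝ) (n : ℤ) : ℝ :=
  if n < n₀ then μ n ^ |γ| else μ n ^ (-|γ|)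

theorem splitWeight_le_rpow {μ : ℤ → ℝ} {n₀ : ℤ} (hμ : ∀ n, 0 < μ n)
    (hn₀ : ∀ n, n < n₀ → μ n < 1) (hn₀' : ∀ n, n₀ ≤ n → 1 ≤ μ n) {γ δ : ℝ} (hδ : |δ| ≤ |γ|)
    (n : ℤ) : splitWeight μ n₀ γ n ≤ μ n ^ δ := by
  unfold splitWeight
  split_ifs with h
  · exact Real.rpow_le_rpow_of_exponent_ge (hμ n) (hn₀ n h).le ((le_abs_self δ).trans hδ)
  · exact Real.rpow_le_rpow_of_exponent_le (hn₀' n (not_lt.1 h))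
      ((neg_le_neg hδ).trans (neg_abs_le δ))

theorem summable_mul_norm_single (w : ℤ → ℝ) (n : ℤ) (v : X) :
    Summable fun m => w m * ‖(Pi.single n v : ℤ → X) m‖ :=
  summable_of_ne_finset_zero (s := {n}) fun m hm => by
    rw [Pi.single_eq_of_ne (Finset.notMem_singleton.1 hm), norm_zero, mul_zero]

variable [NormedSpace ℝ X]

structure IsEvolutionFamily (A : ℤ → X →L[ℝ] X) (𝒜 : ℤ → ℤ → X →L[ℝ] X) : Prop where
  apply_self : ∀ n, 𝒜 n n = 1
  succ : ∀ m n, n ≤ m → 𝒜 (m + 1) n = (A m).comp (𝒜 m n)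

def IsSolution (A : ℤ → X →L[ℝ] X) (y x : ℤ → X) : Prop :=
  ∀ n, x (n + 1) - A n (x n) = y (n + 1)

/-- Admissibility of the pair `(ℓ¹_u, ℓ^∞_w)`. -/
def Admissible (A : ℤ → X →L[ℝ] X) (u w : ℤ → ℝ) : Prop :=
  ∀ y : ℤ → X, Summable (fun n => u n * ‖y n‖) →
    ∃! x : ℤ → X, WeightedBounded w x ∧ IsSolution A y x

def stableSubgroup (𝒜 : ℤ → ℤ → X →L[ℝ] X) (n : ℤ) : AddSubgroup X where
  carrier := {v | ∃ C, ∀ m, n ≤ m → ‖𝒜 m n v‖ ≤ C}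
  zero_mem' := ⟨0, fun m _ => by simp⟩
  add_mem' := by
    rintro v v' ⟨C, hC⟩ ⟨C', hC'⟩
    exact ⟨C + C', fun m hm => by
      rw [map_add]
      exact (norm_add_le _ _).trans (add_le_add (hC m hm) (hC' m hm))⟩
  neg_mem' := by
    rintro v ⟨C, hC⟩
    exact ⟨C, fun m hm => by simpa using hC m hm⟩

def unstableSubgroup (A : ℤ → X →L[ℝ] X) (n : ℤ) : AddSubgroup X where
  carrier := {v | ∃ z : ℤ → X, z n = v ∧
    (∀ m, m < n → z (m + 1) = A m (z m)) ∧ ∃ C, ∀ m, m ≤ n → ‖z m‖ ≤ C}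
  zero_mem' := ⟨0, rfl, fun m _ => by simp, 0, fun m _ => by simp⟩
  add_mem' := by
    rintro v v' ⟨z, rfl, hz, C, hC⟩ ⟨z', rfl, hz', C', hC'⟩
    exact ⟨z + z', rfl, fun m hm => by simp [hz m hm, hz' m hm], C + C',
      fun m hm => (norm_add_le _ _).trans (add_le_add (hC m hm) (hC' m hm))⟩
  neg_mem' := by
    rintro v ⟨z, rfl, hz, C, hC⟩
    exact ⟨-z, rfl, fun m hm => by simp [hz m hm], C, fun m hm => by simpa using hC m hm⟩

variable {A : ℤ → X →L[ℝ] X} {𝒜 : ℤ → ℤ → X →L[ℝ] X}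

theorem Admissible.eq_zero_of_bounded {u w : ℤ → ℝ} (hadm : Admissible A u w)
    (hw : ∀ n, w n ≤ 1) {x : ℤ → X} (hx : ∃ C, ∀ n, ‖x n‖ ≤ C) (hsol : IsSolution A 0 x) :
    x = 0 := by
  obtain ⟨C, hC⟩ := hx
  have hxw : WeightedBounded w x :=
    ⟨C, fun n => (mul_le_of_le_one_left (norm_nonneg _) (hw n)).trans (hC n)⟩
  have h0w : WeightedBounded w (0 : ℤ → X) := ⟨0, fun n => by simp⟩
  exact (hadm 0 (by simp)).unique ⟨hxw, hsol⟩ ⟨h0w, fun n => by simp⟩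

/-- Uniqueness in `ℓ^∞_{w₃}` identifies the solutions in `ℓ^∞_{w₁}` and `ℓ^∞_{w₂}`. -/
theorem exists_bounded_solution {u₁ u₂ u₃ w₁ w₂ w₃ : ℤ → ℝ} (h₁ : Admissible A u₁ w₁)
    (h₂ : Admissible A u₂ w₂) (h₃ : Admissible A u₃ w₃) (h₁₃ : ∀ n, w₃ n ≤ w₁ n)
    (h₂₃ : ∀ n, w₃ n ≤ w₂ n) (h₁₂ : ∀ n, 1 ≤ w₁ n ∨ 1 ≤ w₂ n) {y : ℤ → X}
    (hy₁ : Summable fun n => u₁ n * ‖y n‖) (hy₂ : Summable fun n => u₂ n * ‖y n‖)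
    (hy₃ : Summable fun n => u₃ n * ‖y n‖) :
    ∃ x, (∃ C, ∀ n, ‖x n‖ ≤ C) ∧ IsSolution A y x := by
  obtain ⟨x₁, ⟨hb₁, hsol₁⟩, -⟩ := h₁ y hy₁
  obtain ⟨x₂, ⟨hb₂, hsol₂⟩, -⟩ := h₂ y hy₂
  have h12 : x₁ = x₂ := (h₃ y hy₃).unique ⟨hb₁.mono h₁₃, hsol₁⟩ ⟨hb₂.mono h₂₃, hsol₂⟩
  exact ⟨x₁, hb₁.bounded_of_one_le_or (h12 ▸ hb₂) h₁₂, hsol₁⟩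

namespace IsEvolutionFamily

theorem apply_eq_of_forward_orbit (h𝒜 : IsEvolutionFamily A 𝒜) {x : ℤ → X} {n : ℤ}
    (hx : ∀ m, n ≤ m → x (m + 1) = A m (x m)) : ∀ m, n ≤ m → 𝒜 m n (x n) = x m := by
  refine Int.leInduction (by simp [h𝒜.apply_self]) fun m hm ih => ?_
  rw [h𝒜.succ m n hm, ContinuousLinearMap.comp_apply, ih, hx m hm]

theorem isSolution_zero_extend (h𝒜 : IsEvolutionFamily A 𝒜) {n : ℤ} {z : ℤ → X}
    (hz : ∀ m, m < n → z (m + 1) = A m (z m)) :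
    IsSolution A 0 (fun m => if n ≤ m then 𝒜 m n (z n) else z m) := by
  intro m
  dsimp only
  rw [Pi.zero_apply, sub_eq_zero]
  rcases lt_or_ge m n with hm | hm
  · rw [if_neg hm.not_ge, ← hz m hm]
    split_ifs with h
    · obtain rfl : m + 1 = n := by omega
      simp [h𝒜.apply_self]
    · rfl
  · rw [if_pos hm, if_pos (by omega), h𝒜.succ m n hm, ContinuousLinearMap.comp_apply]

theorem disjoint_stable_unstable (h𝒜 : IsEvolutionFamily A 𝒜) {u w : ℤ → ℝ}
    (hadm : Admissible A u w) (hw : ∀ n, w n ≤ 1) (n : ℤ) :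
    Disjoint (stableSubgroup 𝒜 n) (unstableSubgroup A n) := by
  rw [AddSubgroup.disjoint_def]
  rintro _ ⟨Cs, hCs⟩ ⟨z, rfl, hz, Cz, hCz⟩
  have hbdd : ∃ C, ∀ m, ‖(fun m => if n ≤ m then 𝒜 m n (z n) else z m) m‖ ≤ C := by
    refine ⟨max Cs Cz, fun m => ?_⟩
    dsimp only
    split_ifs with h
    · exact le_max_of_le_left (hCs m h)
    · exact le_max_of_le_right (hCz m (by omega))
  have hzero := hadm.eq_zero_of_bounded hw hbdd (h𝒜.isSolution_zero_extend hz)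
  simpa [h𝒜.apply_self] using congr_fun hzero n

theorem mem_stableSubgroup_of_isSolution_single (h𝒜 : IsEvolutionFamily A 𝒜) {n : ℤ}
    {v : X} {x : ℤ → X} (hsol : IsSolution A (Pi.single n v) x) (hx : ∃ C, ∀ m, ‖x m‖ ≤ C) :
    x n ∈ stableSubgroup 𝒜 n := by
  obtain ⟨C, hC⟩ := hx
  have horbit : ∀ m, n ≤ m → x (m + 1) = A m (x m) := fun m hm => by
    simpa [Pi.single_eq_of_ne (show m + 1 ≠ n by omega), sub_eq_zero] using hsol m
  exact ⟨C, fun m hm => h𝒜.apply_eq_of_forward_orbit horbit m hm ▸ hC m⟩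

end IsEvolutionFamily

theorem sub_mem_unstableSubgroup_of_isSolution_single {n : ℤ} {v : X} {x : ℤ → X}
    (hsol : IsSolution A (Pi.single n v) x) (hx : ∃ C, ∀ m, ‖x m‖ ≤ C) :
    v - x n ∈ unstableSubgroup A n := by
  obtain ⟨C, hC⟩ := hx
  refine ⟨fun m => (Pi.single n v : ℤ → X) m - x m, by simp, fun m hm => ?_, ‖v‖ + C,
    fun m _ => ?_⟩
  · show (Pi.single n v : ℤ → X) (m + 1) - x (m + 1) =
      A m ((Pi.single n v : ℤ → X) m - x m)
    rw [Pi.single_eq_of_ne hm.ne, zero_sub, map_neg, ← hsol m]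
    abel
  · have hsingle : ‖(Pi.single n v : ℤ → X) m‖ ≤ ‖v‖ := by
      rcases eq_or_ne m n with rfl | h
      · simp
      · simp [Pi.single_eq_of_ne h]
    exact (norm_sub_le _ _).trans (add_le_add hsingle (hC m))

end DiscreteAdmissibility

open DiscreteAdmissibility

theorem stmt18_general {X : Type*} [NormedAddCommGroup X] [NormedSpace ℝ X]
    (μ : ℤ → ℝ) (hμpos : ∀ n, 0 < μ n)
    (ν : ℤ → ℝ)
    (n₀ : ℤ) (hn₀ : ∀ n, n < n₀ → μ n < 1) (hn₀' : ∀ n, n₀ ≤ n → 1 ≤ μ n)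
    (A : ℤ → X →L[ℝ] X) (𝒜 : ℤ → ℤ → X →L[ℝ] X)
    (h𝒜id : ∀ n, 𝒜 n n = 1)
    (h𝒜succ : ∀ m n, n ≤ m → 𝒜 (m + 1) n = (A m).comp (𝒜 m n))
    (β : ℝ)
    -- admissibility of the pair `(ℓ^1_β, ℓ^∞_β)`
    (hadm₁ : ∀ y : ℤ → X, Summable (fun n => μ n ^ β * ν n * ‖y n‖) →
      ∃! x : ℤ → X, (∃ C, ∀ n, μ n ^ β * ‖x n‖ ≤ C) ∧
        ∀ n, x (n + 1) - A n (x n) = y (n + 1))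
    -- admissibility of the pair `(ℓ^1_{-β}, ℓ^∞_{-β})`
    (hadm₂ : ∀ y : ℤ → X, Summable (fun n => μ n ^ (-β) * ν n * ‖y n‖) →
      ∃! x : ℤ → X, (∃ C, ∀ n, μ n ^ (-β) * ‖x n‖ ≤ C) ∧
        ∀ n, x (n + 1) - A n (x n) = y (n + 1))
    -- admissibility of the pair `(ℓ^1_{β,|·|}, ℓ^∞_{β,|·|})`, whose weight is
    -- `μ_n^{|β|}` for `n < n₀` and `μ_n^{-|β|}` for `n ≥ n₀`
    (hadm₃ : ∀ y : ℤ → X,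
      Summable (fun n => (if n < n₀ then μ n ^ |β| else μ n ^ (-|β|)) * ν n * ‖y n‖) →
      ∃! x : ℤ → X,
        (∃ C, ∀ n, (if n < n₀ then μ n ^ |β| else μ n ^ (-|β|)) * ‖x n‖ ≤ C) ∧
        ∀ n, x (n + 1) - A n (x n) = y (n + 1))
    (S U : ℤ → Set X)
    (hSdef : ∀ n, S n = {v : X | ∃ C, ∀ m, n ≤ m → ‖𝒜 m n v‖ ≤ C})
    (hUdef : ∀ n, U n = {v : X | ∃ z : ℤ → X, z n = v ∧
      (∀ m, m < n → z (m + 1) = A m (z m)) ∧ ∃ C, ∀ m, m ≤ n → ‖z m‖ ≤ C}) :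
    ∀ n, ∀ v : X, ∃! p : X × X, p.1 ∈ S n ∧ p.2 ∈ U n ∧ v = p.1 + p.2 := by
  have h𝒜 : IsEvolutionFamily A 𝒜 := ⟨h𝒜id, h𝒜succ⟩
  have hadm₁' : Admissible A (fun n => μ n ^ β * ν n) (fun n => μ n ^ β) := hadm₁
  have hadm₂' : Admissible A (fun n => μ n ^ (-β) * ν n) (fun n => μ n ^ (-β)) := hadm₂
  have hadm₃' : Admissible A (fun n => splitWeight μ n₀ β n * ν n) (splitWeight μ n₀ β) :=
    hadm₃
  have hweight : ∀ {δ : ℝ}, |δ| ≤ |β| → ∀ m, splitWeight μ n₀ β m ≤ μ m ^ δ :=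
    splitWeight_le_rpow hμpos hn₀ hn₀'
  have hweight_le_one (m : ℤ) : splitWeight μ n₀ β m ≤ 1 := by
    simpa using hweight (δ := 0) (by simp) m
  intro n v
  obtain ⟨x, hx, hsol⟩ := exists_bounded_solution hadm₁' hadm₂' hadm₃' (hweight le_rfl)
    (hweight (abs_neg β).le) (fun m => one_le_rpow_or_one_le_rpow_neg (hμpos m) β)
    (summable_mul_norm_single _ n v) (summable_mul_norm_single _ n v)
    (summable_mul_norm_single _ n v)
  rw [hSdef n, hUdef n]
  exact AddSubgroup.existsUnique_add_of_disjoint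
    (h𝒜.disjoint_stable_unstable hadm₃' hweight_le_one n)
    (h𝒜.mem_stableSubgroup_of_isSolution_single hsol hx)
    (sub_mem_unstableSubgroup_of_isSolution_single hsol hx) (add_sub_cancel _ _).symm

/-- Two-sided splitting under admissibility: assuming unique solvability of
`x_{n+1} − A_n x_n = y_{n+1}` in the pairs `(ℓ^1_β, ℓ^∞_β)`,
`(ℓ^1_{-β}, ℓ^∞_{-β})` and `(ℓ^1_{β,|·|}, ℓ^∞_{β,|·|})` of weighted spaces of
two-sided sequences, with `S(n) = {v : sup_{m≥n} ‖𝒜(m,n)v‖ < ∞}` and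
`U(n) = {v : ∃ bounded full backward orbit (z_m)_{m≤n} ending at v}`, one has
`X = S(n) ⊕ U(n)` for every `n ∈ ℤ`. -/
theorem stmt18 {X : Type*} [NormedAddCommGroup X] [NormedSpace ℝ X] [CompleteSpace X]
    (μ : ℤ → ℝ) (hμpos : ∀ n, 0 < μ n) (hμmono : StrictMono μ)
    (hμtop : Filter.Tendsto μ Filter.atTop Filter.atTop)
    (hμbot : Filter.Tendsto μ Filter.atBot (nhds 0))
    (ν : ℤ → ℝ) (hν : ∀ n, 1 ≤ ν n)
    (n₀ : ℤ) (hn₀ : ∀ n, n < n₀ → μ n < 1) (hn₀' : ∀ n, n₀ ≤ n → 1 ≤ μ n)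
    (A : ℤ → X →L[ℝ] X) (𝒜 : ℤ → ℤ → X →L[ℝ] X)
    (h𝒜id : ∀ n, 𝒜 n n = 1)
    (h𝒜succ : ∀ m n, n ≤ m → 𝒜 (m + 1) n = (A m).comp (𝒜 m n))
    (β : ℝ) (hβ : 0 < β)
    -- admissibility of the pair `(ℓ^1_β, ℓ^∞_β)`
    (hadm₁ : ∀ y : ℤ → X, Summable (fun n => μ n ^ β * ν n * ‖y n‖) →
      ∃! x : ℤ → X, (∃ C, ∀ n, μ n ^ β * ‖x n‖ ≤ C) ∧
        ∀ n, x (n + 1) - A n (x n) = y (n + 1))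
    -- admissibility of the pair `(ℓ^1_{-β}, ℓ^∞_{-β})`
    (hadm₂ : ∀ y : ℤ → X, Summable (fun n => μ n ^ (-β) * ν n * ‖y n‖) →
      ∃! x : ℤ → X, (∃ C, ∀ n, μ n ^ (-β) * ‖x n‖ ≤ C) ∧
        ∀ n, x (n + 1) - A n (x n) = y (n + 1))
    -- admissibility of the pair `(ℓ^1_{β,|·|}, ℓ^∞_{β,|·|})`, whose weight is
    -- `μ_n^{|β|}` for `n < n₀` and `μ_n^{-|β|}` for `n ≥ n₀`
    (hadm₃ : ∀ y : ℤ → X,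
      Summable (fun n => (if n < n₀ then μ n ^ |β| else μ n ^ (-|β|)) * ν n * ‖y n‖) →
      ∃! x : ℤ → X,
        (∃ C, ∀ n, (if n < n₀ then μ n ^ |β| else μ n ^ (-|β|)) * ‖x n‖ ≤ C) ∧
        ∀ n, x (n + 1) - A n (x n) = y (n + 1))
    (S U : ℤ → Set X)
    (hSdef : ∀ n, S n = {v : X | ∃ C, ∀ m, n ≤ m → ‖𝒜 m n v‖ ≤ C})
    (hUdef : ∀ n, U n = {v : X | ∃ z : ℤ → X, z n = v ∧
      (∀ m, m < n → z (m + 1) = A m (z m)) ∧ ∃ C, ∀ m, m ≤ n → ‖z m‖ ≤ C}) :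
    ∀ n, ∀ v : X, ∃! p : X × X, p.1 ∈ S n ∧ p.2 ∈ U n ∧ v = p.1 + p.2 :=
  stmt18_general μ hμpos ν n₀ hn₀ hn₀' A 𝒜 h𝒜id h𝒜succ β hadm₁ hadm₂ hadm₃ S U hSdef hUdef
end

section
/- Counterexample: let X = ℝ, μ_n = e^{e^n}, A_n = (μ_{n+1}/μ_n)^{-1/2}, so 𝒜(m,n) = (μ_m/μ_n)^{-1/2} for m ≥ n, and φ_n^μ = μ_n/(μ_{n+1} − μ_n). Let y_0 = 0 and y_n = 1 for n ≥ 1. Then there is no bounded sequence (x_n)_{n∈ℕ} with x_0 = 0 satisfying φ_{n+1}^μ (x_{n+1} − A_n x_n) = y_{n+1} for all n ∈ ℕ. In fact any such sequence satisfies x_n ≥ 2((μ_{n+1}/μ_n)^{1/2} − (μ_1/μ_n)^{1/2}) for n ≥ 1, which tends to ∞. -/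
/-!
Multiplying the recursion by `√μₙ` turns it into the telescoping recursion
`√μₙ₊₁ xₙ₊₁ = √μₙ xₙ + (μₙ₊₂ − μₙ₊₁)/√μₙ₊₁`, and `(b − a)/√a ≥ 2(√b − √a)` because the
difference is `(√b − √a)²/√a`. Summing gives `√μₙ xₙ ≥ 2(√μₙ₊₁ − √μ₁)`, so `xₙ` grows at
least like `2√(μₙ₊₁/μₙ)`, which is unbounded for `μₙ = e^{eⁿ}`.
-/

open Filter Real

lemma rpow_half_div {a : ℝ} (ha : 0 ≤ a) (b : ℝ) : (a / b) ^ ((1 : ℝ) / 2) = √a / √b := by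
  rw [← sqrt_eq_rpow, sqrt_div ha]

lemma rpow_neg_half_div {a b : ℝ} (ha : 0 ≤ a) (hb : 0 ≤ b) :
    (a / b) ^ (-(1 : ℝ) / 2) = √b / √a := by
  rw [neg_div, rpow_neg (div_nonneg ha hb), rpow_half_div ha, inv_div]

lemma two_mul_sqrt_sub_sqrt_le {a b : ℝ} (ha : 0 < a) (hb : 0 ≤ b) :
    2 * (√b - √a) ≤ (b - a) / √a := by
  have hsa := sqrt_pos.mpr ha
  rw [le_div_iff₀ hsa]
  nlinarith [sq_nonneg (√b - √a), mul_self_sqrt ha.le, mul_self_sqrt hb]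

lemma sqrt_mul_eq_of_step {a b c u v : ℝ} (hb : 0 < b)
    (h : b / (c - b) * (v - √a / √b * u) = 1) : √b * v = √a * u + (c - b) / √b := by
  have hsb := (sqrt_pos.mpr hb).ne'
  have hv : v - √a / √b * u = (c - b) / b := by rw [eq_inv_of_mul_eq_one_right h, inv_div]
  calc √b * v = √a * u + √b * (v - √a / √b * u) := by field_simp; ring
    _ = √a * u + √b * ((c - b) / (√b * √b)) := by rw [hv, mul_self_sqrt hb.le]
    _ = √a * u + (c - b) / √b := by field_simp

section Recursion

variable {μ x : ℕ → ℝ}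

lemma two_mul_sqrt_sub_le_sqrt_mul (hμ : ∀ n, 0 < μ n) (hx0 : x 0 = 0)
    (hx : ∀ n, μ (n + 1) / (μ (n + 1 + 1) - μ (n + 1)) *
      (x (n + 1) - √(μ n) / √(μ (n + 1)) * x n) = 1) (n : ℕ) :
    2 * (√(μ (n + 1)) - √(μ 1)) ≤ √(μ n) * x n := by
  induction n with
  | zero => simp [hx0]
  | succ n ih =>
    rw [sqrt_mul_eq_of_step (hμ (n + 1)) (hx n)]
    linarith [two_mul_sqrt_sub_sqrt_le (hμ (n + 1)) (hμ (n + 1 + 1)).le]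

lemma two_mul_sqrt_div_sub_le (hμ : ∀ n, 0 < μ n) (hx0 : x 0 = 0)
    (hx : ∀ n, μ (n + 1) / (μ (n + 1 + 1) - μ (n + 1)) *
      (x (n + 1) - √(μ n) / √(μ (n + 1)) * x n) = 1) (n : ℕ) :
    2 * (√(μ (n + 1)) / √(μ n) - √(μ 1) / √(μ n)) ≤ x n := by
  have hsn := sqrt_pos.mpr (hμ n)
  rw [← sub_div, ← mul_div_assoc, div_le_iff₀ hsn, mul_comm (x n)]
  exact two_mul_sqrt_sub_le_sqrt_mul hμ hx0 hx n

lemma tendsto_atTop_of_recursion (hμ : ∀ n, 0 < μ n) (hmono : Monotone μ)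
    (hratio : Tendsto (fun n => μ (n + 1) / μ n) atTop atTop) (hx0 : x 0 = 0)
    (hx : ∀ n, μ (n + 1) / (μ (n + 1 + 1) - μ (n + 1)) *
      (x (n + 1) - √(μ n) / √(μ (n + 1)) * x n) = 1) :
    Tendsto x atTop atTop := by
  have hsqrt : Tendsto (fun n => 2 * (√(μ (n + 1)) / √(μ n) - 1)) atTop atTop := by
    refine Tendsto.const_mul_atTop two_pos (tendsto_atTop_add_const_right _ _ ?_)
    exact (tendsto_sqrt_atTop.comp hratio).congr fun n => sqrt_div (hμ _).le _
  refine tendsto_atTop_mono' _ ?_ hsqrt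
  filter_upwards [eventually_ge_atTop 1] with n hn
  have hs1 : √(μ 1) / √(μ n) ≤ 1 :=
    div_le_one_of_le₀ (sqrt_le_sqrt (hmono hn)) (sqrt_nonneg _)
  linarith [two_mul_sqrt_div_sub_le hμ hx0 hx n]

end Recursion

lemma tendsto_exp_exp_succ_div :
    Tendsto (fun n : ℕ => exp (exp (n + 1 : ℕ)) / exp (exp n)) atTop atTop := by
  have hexp : ∀ n : ℕ, exp (exp (n + 1 : ℕ)) / exp (exp n) = exp (exp n * (exp 1 - 1)) := by
    intro n
    rw [← exp_sub, Nat.cast_succ, exp_add]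
    ring_nf
  simp only [hexp]
  have he : 0 < exp 1 - 1 := by linarith [add_one_lt_exp one_ne_zero]
  exact tendsto_exp_atTop.comp
    ((tendsto_exp_atTop.comp tendsto_natCast_atTop_atTop).atTop_mul_const he)

theorem stmt19_general
    (μ : ℕ → ℝ) (hμ : ∀ n, μ n = Real.exp (Real.exp n))
    (A : ℕ → ℝ) (hA : ∀ n, A n = (μ (n + 1) / μ n) ^ (-(1 : ℝ) / 2))
    (φ : ℕ → ℝ) (hφ : ∀ n, φ n = μ n / (μ (n + 1) - μ n))
    (y : ℕ → ℝ) (hy : ∀ n, 1 ≤ n → y n = 1) :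
    (∀ x : ℕ → ℝ, x 0 = 0 →
      (∀ n, φ (n + 1) * (x (n + 1) - A n * x n) = y (n + 1)) →
      ∀ n, 1 ≤ n →
        2 * ((μ (n + 1) / μ n) ^ ((1 : ℝ) / 2) - (μ 1 / μ n) ^ ((1 : ℝ) / 2))
          ≤ x n)
    ∧ ¬ ∃ x : ℕ → ℝ, (∃ C, ∀ n, |x n| ≤ C) ∧ x 0 = 0 ∧
        ∀ n, φ (n + 1) * (x (n + 1) - A n * x n) = y (n + 1) := by
  have hpos : ∀ n, 0 < μ n := fun n => hμ n ▸ exp_pos _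
  have hmono : Monotone μ := fun m n h => by
    simp only [hμ, exp_le_exp, Nat.cast_le.mpr h]
  have hratio : Tendsto (fun n => μ (n + 1) / μ n) atTop atTop := by
    simpa only [hμ] using tendsto_exp_exp_succ_div
  have hrec : ∀ x : ℕ → ℝ, (∀ n, φ (n + 1) * (x (n + 1) - A n * x n) = y (n + 1)) →
      ∀ n, μ (n + 1) / (μ (n + 1 + 1) - μ (n + 1)) *
        (x (n + 1) - √(μ n) / √(μ (n + 1)) * x n) = 1 := by
    intro x hx n
    rw [← hy (n + 1) n.succ_pos, ← hφ, ← rpow_neg_half_div (hpos _).le (hpos _).le, ← hA]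
    exact hx n
  refine ⟨fun x hx0 hx n _ => ?_, ?_⟩
  · rw [rpow_half_div (hpos _).le, rpow_half_div (hpos _).le]
    exact two_mul_sqrt_div_sub_le hpos hx0 (hrec x hx) n
  · rintro ⟨x, ⟨C, hC⟩, hx0, hx⟩
    obtain ⟨n, hn⟩ :=
      ((tendsto_atTop_of_recursion hpos hmono hratio hx0 (hrec x hx)).eventually_gt_atTop C).exists
    linarith [(abs_le.mp (hC n)).2]

/-- Counterexample: for `X = ℝ`, `μ_n = e^{e^n}`, `A_n = (μ_{n+1}/μ_n)^{-1/2}`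
and `φ_n^μ = μ_n/(μ_{n+1} − μ_n)`, with input `y_0 = 0`, `y_n = 1` (`n ≥ 1`),
any sequence `(x_n)` with `x_0 = 0` satisfying
`φ_{n+1}^μ (x_{n+1} − A_n x_n) = y_{n+1}` for all `n` obeys
`x_n ≥ 2((μ_{n+1}/μ_n)^{1/2} − (μ_1/μ_n)^{1/2})` for `n ≥ 1`; in particular no
such bounded sequence exists. -/
theorem stmt19
    (μ : ℕ → ℝ) (hμ : ∀ n, μ n = Real.exp (Real.exp n))
    (A : ℕ → ℝ) (hA : ∀ n, A n = (μ (n + 1) / μ n) ^ (-(1 : ℝ) / 2))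
    (φ : ℕ → ℝ) (hφ : ∀ n, φ n = μ n / (μ (n + 1) - μ n))
    (y : ℕ → ℝ) (hy0 : y 0 = 0) (hy : ∀ n, 1 ≤ n → y n = 1) :
    (∀ x : ℕ → ℝ, x 0 = 0 →
      (∀ n, φ (n + 1) * (x (n + 1) - A n * x n) = y (n + 1)) →
      ∀ n, 1 ≤ n →
        2 * ((μ (n + 1) / μ n) ^ ((1 : ℝ) / 2) - (μ 1 / μ n) ^ ((1 : ℝ) / 2))
          ≤ x n)
    ∧ ¬ ∃ x : ℕ → ℝ, (∃ C, ∀ n, |x n| ≤ C) ∧ x 0 = 0 ∧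
        ∀ n, φ (n + 1) * (x (n + 1) - A n * x n) = y (n + 1) :=
  stmt19_general μ hμ A hA φ hφ y hy
end
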